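/- arXiv:1106.2447 — 6 statements merged into one kernel-verified Lean document; each statement's English description precedes it below -/
import Mathlib

section
/- Let P = (P₋, P₊) be a linear Jordan pair. The k-module TKK(P) = P₋ ⊕ ins(P) ⊕ P₊, where ins(P) is the inner structure algebra spanned by the operators ν(a,b) = (V_{a,b}, -V_{b,a}), equipped with the bracket [a+X+b, c+Y+d] = (Xc - Ya) + ([X,Y] + ν(a,d) - ν(c,b)) + (Xd - Yb) for X,Y ∈ ins(P), a,c ∈ P₋, b,d ∈ P₊, is a Lie algebra. -/
/-- A (not yet bundled) Lie bracket on a `k`-module: bilinear, alternating,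
and satisfying the Jacobi (Leibniz) identity. -/
def IsLieBracket {k V : Type*} [CommRing k] [AddCommGroup V] [Module k V]
    (B : V → V → V) : Prop :=
  (∀ x y z, B (x + y) z = B x z + B y z) ∧
  (∀ x y z, B x (y + z) = B x y + B x z) ∧
  (∀ (c : k) x y, B (c • x) y = c • B x y) ∧
  (∀ (c : k) x y, B x (c • y) = c • B x y) ∧
  (∀ x, B x x = 0) ∧
  (∀ x y z, B x (B y z) = B (B x y) z + B y (B x z))

/-!
The bracket is bilinear and alternating by inspection. In the Jacobi identity the `P₋` and `P₊`
components reduce to the symmetry `{a,b,c} = {c,b,a}`. The middle component reduces to the Jacobi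
identity of `gl(P₋) ⊕ gl(P₊)` together with the fact that every `X ∈ ins(P)` acts on `ν` as a
derivation, `⁅X, ν(c,f)⁆ = ν(Xc, f) + ν(c, Xf)`: for `X = ν(a,b)` this is the Jordan identity
(in both components), and by linearity it extends to the span. The same relation shows that
`ins(P)` is closed under the bracket.
-/

namespace JordanPair

attribute [local instance] LieRing.ofAssociativeRing LieAlgebra.ofAssociativeAlgebra

variable {k Pm Pp : Type*} [CommRing k] [AddCommGroup Pm] [AddCommGroup Pp]
  [Module k Pm] [Module k Pp]
  (tm : Pm →ₗ[k] Pp →ₗ[k] Pm →ₗ[k] Pm) (tp : Pp →ₗ[k] Pm →ₗ[k] Pp →ₗ[k] Pp)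

def nu : Pm →ₗ[k] Pp →ₗ[k] Module.End k Pm × Module.End k Pp :=
  LinearMap.mk₂ k (fun a b => (tm a b, -tp b a))
    (fun a a' b => by simp only [map_add, LinearMap.add_apply, neg_add, Prod.mk_add_mk])
    (fun c a b => by simp only [map_smul, LinearMap.smul_apply, smul_neg, Prod.smul_mk])
    (fun a b b' => by simp only [map_add, LinearMap.add_apply, neg_add, Prod.mk_add_mk])
    (fun c a b => by simp only [map_smul, LinearMap.smul_apply, smul_neg, Prod.smul_mk])

theorem nu_apply (a : Pm) (b : Pp) : nu tm tp a b = (tm a b, -tp b a) := rfl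

theorem lie_nu_nu
    (jid_m : ∀ a b c d x, tm a b (tm c d x) - tm c d (tm a b x)
      = tm (tm a b c) d x - tm c (tp b a d) x)
    (jid_p : ∀ b a d c y, tp b a (tp d c y) - tp d c (tp b a y)
      = tp (tp b a d) c y - tp d (tm a b c) y)
    (a c : Pm) (b f : Pp) :
    ⁅nu tm tp a b, nu tm tp c f⁆ = nu tm tp (tm a b c) f - nu tm tp c (tp b a f) := by
  refine Prod.ext (LinearMap.ext fun x => ?_) (LinearMap.ext fun y => ?_)
  · simpa [nu_apply, Ring.lie_def] using jid_m a b c f x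
  · simp only [nu_apply, Ring.lie_def, Prod.snd_sub, Prod.snd_mul, neg_mul_neg, sub_neg_eq_add,
      LinearMap.sub_apply, LinearMap.add_apply, LinearMap.neg_apply, Module.End.mul_apply]
    rw [jid_p b a f c y]
    abel

def ins : Submodule k (Module.End k Pm × Module.End k Pp) :=
  Submodule.span k {z | ∃ a b, z = nu tm tp a b}

theorem nu_mem_ins (a : Pm) (b : Pp) : nu tm tp a b ∈ ins tm tp :=
  Submodule.subset_span ⟨a, b, rfl⟩

variable {tm tp}

theorem lie_nu_of_mem_ins
    (jid_m : ∀ a b c d x, tm a b (tm c d x) - tm c d (tm a b x)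
      = tm (tm a b c) d x - tm c (tp b a d) x)
    (jid_p : ∀ b a d c y, tp b a (tp d c y) - tp d c (tp b a y)
      = tp (tp b a d) c y - tp d (tm a b c) y)
    {X : Module.End k Pm × Module.End k Pp} (hX : X ∈ ins tm tp) (c : Pm) (f : Pp) :
    ⁅X, nu tm tp c f⁆ = nu tm tp (X.1 c) f + nu tm tp c (X.2 f) := by
  induction hX using Submodule.span_induction with
  | mem x hx =>
    obtain ⟨a, b, rfl⟩ := hx
    rw [lie_nu_nu tm tp jid_m jid_p, nu_apply tm tp a b]
    simp only [LinearMap.neg_apply, map_neg, sub_eq_add_neg]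
  | zero => simp
  | add x y _ _ hx hy =>
    simp only [add_lie, hx, hy, Prod.fst_add, Prod.snd_add, LinearMap.add_apply, map_add]
    abel
  | smul r x _ hx =>
    simp only [smul_lie, hx, Prod.smul_fst, Prod.smul_snd, LinearMap.smul_apply, map_smul,
      smul_add]

theorem lie_mem_ins
    (jid_m : ∀ a b c d x, tm a b (tm c d x) - tm c d (tm a b x)
      = tm (tm a b c) d x - tm c (tp b a d) x)
    (jid_p : ∀ b a d c y, tp b a (tp d c y) - tp d c (tp b a y)
      = tp (tp b a d) c y - tp d (tm a b c) y)
    {X Y : Module.End k Pm × Module.End k Pp} (hX : X ∈ ins tm tp) (hY : Y ∈ ins tm tp) :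
    ⁅X, Y⁆ ∈ ins tm tp := by
  induction hY using Submodule.span_induction with
  | mem y hy =>
    obtain ⟨c, f, rfl⟩ := hy
    rw [lie_nu_of_mem_ins jid_m jid_p hX]
    exact add_mem (nu_mem_ins tm tp _ _) (nu_mem_ins tm tp _ _)
  | zero => simp
  | add y z _ _ hy hz => rw [lie_add]; exact add_mem hy hz
  | smul r y _ hy => rw [lie_smul]; exact Submodule.smul_mem _ r hy

section TKK

variable (tm tp)
variable (D : Submodule k (Module.End k Pm × Module.End k Pp))
  (hD : ∀ X ∈ D, ∀ Y ∈ D, ⁅X, Y⁆ ∈ D) (hnu : ∀ a b, nu tm tp a b ∈ D)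

/-- The bracket of `TKK(P, D) = P₋ ⊕ D ⊕ P₊`. -/
def tkkBracket : Pm × D × Pp → Pm × D × Pp → Pm × D × Pp
  | (a, X, b), (c, Y, d) =>
    (X.val.1 c - Y.val.1 a,
      ⟨⁅X.val, Y.val⁆ + nu tm tp a d - nu tm tp c b,
        sub_mem (add_mem (hD _ X.2 _ Y.2) (hnu a d)) (hnu c b)⟩,
      X.val.2 d - Y.val.2 b)

variable {D hD hnu}

@[simp]
theorem tkkBracket_fst (p q : Pm × D × Pp) :
    (tkkBracket tm tp D hD hnu p q).1
      = (p.2.1 : Module.End k Pm × Module.End k Pp).1 q.1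
        - (q.2.1 : Module.End k Pm × Module.End k Pp).1 p.1 := rfl

@[simp]
theorem coe_tkkBracket_snd_fst (p q : Pm × D × Pp) :
    ((tkkBracket tm tp D hD hnu p q).2.1 : Module.End k Pm × Module.End k Pp)
      = ⁅(p.2.1 : Module.End k Pm × Module.End k Pp),
          (q.2.1 : Module.End k Pm × Module.End k Pp)⁆
        + nu tm tp p.1 q.2.2 - nu tm tp q.1 p.2.2 := rfl

@[simp]
theorem tkkBracket_snd_snd (p q : Pm × D × Pp) :
    (tkkBracket tm tp D hD hnu p q).2.2
      = (p.2.1 : Module.End k Pm × Module.End k Pp).2 q.2.2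
        - (q.2.1 : Module.End k Pm × Module.End k Pp).2 p.2.2 := rfl

theorem tkkBracket_add_left (x y z : Pm × D × Pp) :
    tkkBracket tm tp D hD hnu (x + y) z
      = tkkBracket tm tp D hD hnu x z + tkkBracket tm tp D hD hnu y z := by
  refine Prod.ext ?_ (Prod.ext (Subtype.ext ?_) ?_) <;>
    simp only [tkkBracket_fst, coe_tkkBracket_snd_fst, tkkBracket_snd_snd, Prod.fst_add,
      Prod.snd_add, Submodule.coe_add, LinearMap.add_apply, map_add, add_lie] <;>
    abel

theorem tkkBracket_add_right (x y z : Pm × D × Pp) :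
    tkkBracket tm tp D hD hnu x (y + z)
      = tkkBracket tm tp D hD hnu x y + tkkBracket tm tp D hD hnu x z := by
  refine Prod.ext ?_ (Prod.ext (Subtype.ext ?_) ?_) <;>
    simp only [tkkBracket_fst, coe_tkkBracket_snd_fst, tkkBracket_snd_snd, Prod.fst_add,
      Prod.snd_add, Submodule.coe_add, LinearMap.add_apply, map_add, lie_add] <;>
    abel

theorem tkkBracket_smul_left (c : k) (x y : Pm × D × Pp) :
    tkkBracket tm tp D hD hnu (c • x) y = c • tkkBracket tm tp D hD hnu x y := by
  refine Prod.ext ?_ (Prod.ext (Subtype.ext ?_) ?_) <;>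
    simp only [tkkBracket_fst, coe_tkkBracket_snd_fst, tkkBracket_snd_snd, Prod.smul_fst,
      Prod.smul_snd, Submodule.coe_smul, LinearMap.smul_apply, map_smul, smul_lie, smul_sub,
      smul_add]

theorem tkkBracket_smul_right (c : k) (x y : Pm × D × Pp) :
    tkkBracket tm tp D hD hnu x (c • y) = c • tkkBracket tm tp D hD hnu x y := by
  refine Prod.ext ?_ (Prod.ext (Subtype.ext ?_) ?_) <;>
    simp only [tkkBracket_fst, coe_tkkBracket_snd_fst, tkkBracket_snd_snd, Prod.smul_fst,
      Prod.smul_snd, Submodule.coe_smul, LinearMap.smul_apply, map_smul, lie_smul, smul_sub,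
      smul_add]

theorem tkkBracket_self (x : Pm × D × Pp) : tkkBracket tm tp D hD hnu x x = 0 := by
  refine Prod.ext ?_ (Prod.ext (Subtype.ext ?_) ?_) <;>
    simp only [tkkBracket_fst, coe_tkkBracket_snd_fst, tkkBracket_snd_snd, sub_self, lie_self,
      zero_add, Prod.fst_zero, Prod.snd_zero, Submodule.coe_zero]

theorem tkkBracket_leibniz
    (symm_m : ∀ a b c, tm a b c = tm c b a) (symm_p : ∀ b a d, tp b a d = tp d a b)
    (hder : ∀ X ∈ D, ∀ c f, ⁅X, nu tm tp c f⁆ = nu tm tp (X.1 c) f + nu tm tp c (X.2 f))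
    (x y z : Pm × D × Pp) :
    tkkBracket tm tp D hD hnu x (tkkBracket tm tp D hD hnu y z)
      = tkkBracket tm tp D hD hnu (tkkBracket tm tp D hD hnu x y) z
        + tkkBracket tm tp D hD hnu y (tkkBracket tm tp D hD hnu x z) := by
  obtain ⟨a, ⟨X, hX⟩, b⟩ := x
  obtain ⟨c, ⟨Y, hY⟩, d⟩ := y
  obtain ⟨e, ⟨Z, hZ⟩, f⟩ := z
  refine Prod.ext ?_ (Prod.ext (Subtype.ext ?_) ?_)
  · simp only [tkkBracket_fst, coe_tkkBracket_snd_fst, nu_apply, Ring.lie_def, Prod.fst_add,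
      Prod.fst_sub, Prod.fst_mul, LinearMap.sub_apply, LinearMap.add_apply, Module.End.mul_apply,
      map_sub]
    rw [symm_m c f a, symm_m e d a, symm_m c b e]
    abel
  · have hder_left : ∀ c f, ⁅nu tm tp c f, Z⁆ = -nu tm tp (Z.1 c) f - nu tm tp c (Z.2 f) :=
      fun c f => by rw [← lie_skew, hder Z hZ]; abel
    simp only [coe_tkkBracket_snd_fst, tkkBracket_fst, tkkBracket_snd_snd, Prod.fst_add,
      Prod.snd_add, Submodule.coe_add, lie_add, lie_sub, add_lie, sub_lie, map_sub,
      LinearMap.sub_apply]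
    rw [leibniz_lie, hder X hX c f, hder X hX e d, hder Y hY a f, hder Y hY e b,
      hder_left a d, hder_left c b]
    abel
  · simp only [coe_tkkBracket_snd_fst, tkkBracket_snd_snd, nu_apply, Ring.lie_def, Prod.snd_add,
      Prod.snd_sub, Prod.snd_mul, LinearMap.sub_apply, LinearMap.add_apply, LinearMap.neg_apply,
      Module.End.mul_apply, map_sub]
    rw [symm_p f c b, symm_p d e b, symm_p d a f]
    abel

theorem isLieBracket_tkkBracket
    (symm_m : ∀ a b c, tm a b c = tm c b a) (symm_p : ∀ b a d, tp b a d = tp d a b)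
    (hder : ∀ X ∈ D, ∀ c f, ⁅X, nu tm tp c f⁆ = nu tm tp (X.1 c) f + nu tm tp c (X.2 f)) :
    IsLieBracket (k := k) (tkkBracket tm tp D hD hnu) :=
  ⟨tkkBracket_add_left tm tp, tkkBracket_add_right tm tp, tkkBracket_smul_left tm tp,
    tkkBracket_smul_right tm tp, tkkBracket_self tm tp,
    tkkBracket_leibniz tm tp symm_m symm_p hder⟩

end TKK

end JordanPair

theorem stmt1_general {k : Type*} [CommRing k]
    {Pm Pp : Type*} [AddCommGroup Pm] [AddCommGroup Pp] [Module k Pm] [Module k Pp]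
    (tm : Pm →ₗ[k] Pp →ₗ[k] Pm →ₗ[k] Pm)
    (tp : Pp →ₗ[k] Pm →ₗ[k] Pp →ₗ[k] Pp)
    (symm_m : ∀ a b c, tm a b c = tm c b a)
    (symm_p : ∀ b a d, tp b a d = tp d a b)
    (jid_m : ∀ a b c d x, tm a b (tm c d x) - tm c d (tm a b x)
      = tm (tm a b c) d x - tm c (tp b a d) x)
    (jid_p : ∀ b a d c y, tp b a (tp d c y) - tp d c (tp b a y)
      = tp (tp b a d) c y - tp d (tm a b c) y)
    (ν : Pm → Pp → Module.End k Pm × Module.End k Pp)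
    (hν : ∀ a b, ν a b = (tm a b, -(tp b a)))
    -- ins(P), the inner structure algebra
    (I : Submodule k (Module.End k Pm × Module.End k Pp))
    (hI : I = Submodule.span k {z | ∃ a b, z = ν a b}) :
    ∃ B : (Pm × I × Pp) → (Pm × I × Pp) → (Pm × I × Pp),
      IsLieBracket (k := k) B ∧
      (∀ p q, (B p q).1
        = ((p.2.1 : Module.End k Pm × Module.End k Pp)).1 q.1
          - ((q.2.1 : Module.End k Pm × Module.End k Pp)).1 p.1) ∧
      (∀ p q, ((B p q).2.1 : Module.End k Pm × Module.End k Pp)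
        = ⁅(p.2.1 : Module.End k Pm × Module.End k Pp),
           (q.2.1 : Module.End k Pm × Module.End k Pp)⁆
          + ν p.1 q.2.2 - ν q.1 p.2.2) ∧
      (∀ p q, (B p q).2.2
        = ((p.2.1 : Module.End k Pm × Module.End k Pp)).2 q.2.2
          - ((q.2.1 : Module.End k Pm × Module.End k Pp)).2 p.2.2) := by
  obtain rfl : ν = fun a b => JordanPair.nu tm tp a b := funext fun a => funext (hν a)
  obtain rfl : I = JordanPair.ins tm tp := hI
  exact ⟨JordanPair.tkkBracket tm tp _ (fun _ hX _ hY => JordanPair.lie_mem_ins jid_m jid_p hX hY)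
      (JordanPair.nu_mem_ins tm tp),
    JordanPair.isLieBracket_tkkBracket tm tp symm_m symm_p
      (fun _ hX => JordanPair.lie_nu_of_mem_ins jid_m jid_p hX),
    fun _ _ => rfl, fun _ _ => rfl, fun _ _ => rfl⟩

/-- For a linear Jordan pair `P`, the module
`TKK(P) = P₋ ⊕ ins(P) ⊕ P₊`, where `ins(P)` is the span of the operators
`ν(a,b) = (V_{a,b}, -V_{b,a})`, equipped with the bracket
`[a+X+b, c+Y+d] = (Xc - Ya) + ([X,Y] + ν(a,d) - ν(c,b)) + (Xd - Yb)`,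
is a Lie algebra. -/
theorem stmt1 {k : Type*} [CommRing k]
    (htor2 : ∀ x : k, 2 * x = 0 → x = 0) (htor3 : ∀ x : k, 3 * x = 0 → x = 0)
    {Pm Pp : Type*} [AddCommGroup Pm] [AddCommGroup Pp] [Module k Pm] [Module k Pp]
    (tm : Pm →ₗ[k] Pp →ₗ[k] Pm →ₗ[k] Pm)
    (tp : Pp →ₗ[k] Pm →ₗ[k] Pp →ₗ[k] Pp)
    (symm_m : ∀ a b c, tm a b c = tm c b a)
    (symm_p : ∀ b a d, tp b a d = tp d a b)
    (jid_m : ∀ a b c d x, tm a b (tm c d x) - tm c d (tm a b x)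
      = tm (tm a b c) d x - tm c (tp b a d) x)
    (jid_p : ∀ b a d c y, tp b a (tp d c y) - tp d c (tp b a y)
      = tp (tp b a d) c y - tp d (tm a b c) y)
    (ν : Pm → Pp → Module.End k Pm × Module.End k Pp)
    (hν : ∀ a b, ν a b = (tm a b, -(tp b a)))
    -- ins(P), the inner structure algebra
    (I : Submodule k (Module.End k Pm × Module.End k Pp))
    (hI : I = Submodule.span k {z | ∃ a b, z = ν a b}) :
    ∃ B : (Pm × I × Pp) → (Pm × I × Pp) → (Pm × I × Pp),
      IsLieBracket (k := k) B ∧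
      (∀ p q, (B p q).1
        = ((p.2.1 : Module.End k Pm × Module.End k Pp)).1 q.1
          - ((q.2.1 : Module.End k Pm × Module.End k Pp)).1 p.1) ∧
      (∀ p q, ((B p q).2.1 : Module.End k Pm × Module.End k Pp)
        = ⁅(p.2.1 : Module.End k Pm × Module.End k Pp),
           (q.2.1 : Module.End k Pm × Module.End k Pp)⁆
          + ν p.1 q.2.2 - ν q.1 p.2.2) ∧
      (∀ p q, (B p q).2.2
        = ((p.2.1 : Module.End k Pm × Module.End k Pp)).2 q.2.2
          - ((q.2.1 : Module.End k Pm × Module.End k Pp)).2 p.2.2) :=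
  stmt1_general tm tp symm_m symm_p jid_m jid_p ν hν I hI
end

section
/- Let M be a module over a Lie algebra L and λ : M → L an L-module epimorphism (where L acts on itself adjointly). Then A(M) = span{λ(m)·m : m ∈ M} is an L-submodule of M, the quotient Q = M/A(M) carries a Lie algebra structure with bracket [p,q] = μ(p)·q (where μ : Q → L is induced by λ), and μ : Q → L is a central extension of Lie algebras (a surjective Lie homomorphism with kernel contained in the center of Q). -/
/-!
For an equivariant `f : M → L` the bracket `⁅f p, q⁆` is bilinear and satisfies the Jacobi
identity, because `f ⁅f p, q⁆ = ⁅f p, f q⁆`; it fails to be a Lie bracket only by the elements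
`⁅f m, m⁆`. These span a Lie submodule `A` (polarization turns `⁅x, ⁅f m, m⁆⁆` into
`⁅f ⁅x, m⁆, m⁆ + ⁅f m, ⁅x, m⁆⁆`) contained in `ker f`, so on `M ⧸ A` the induced map is again
equivariant and now `⁅μ q, q⁆ = 0`. The kernel of `μ` is central since `⁅μ q, p⁆ = -⁅μ p, q⁆`.
-/

section LieApply

variable {k L M : Type*} [CommRing k] [LieRing L] [LieAlgebra k L]
  [AddCommGroup M] [Module k M] [LieRingModule L M]
  (f : M →ₗ⁅k,L⁆ L)

theorem lie_apply_add_add_self (m n : M) :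
    ⁅f (m + n), m + n⁆ = ⁅f m, m⁆ + ⁅f m, n⁆ + ⁅f n, m⁆ + ⁅f n, n⁆ := by
  rw [map_add, add_lie, lie_add, lie_add]
  abel

theorem lie_apply_add_lie_apply_mem {A : Submodule k M} (hA : ∀ n, ⁅f n, n⁆ ∈ A) (m n : M) :
    ⁅f m, n⁆ + ⁅f n, m⁆ ∈ A := by
  have key : ⁅f m, n⁆ + ⁅f n, m⁆ = ⁅f (m + n), m + n⁆ - ⁅f m, m⁆ - ⁅f n, n⁆ := by
    rw [lie_apply_add_add_self]
    abel
  rw [key]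
  exact A.sub_mem (A.sub_mem (hA _) (hA _)) (hA _)

variable {f}

theorem lie_apply_add_lie_apply_eq_zero (hf : ∀ q, ⁅f q, q⁆ = 0) (p q : M) :
    ⁅f p, q⁆ + ⁅f q, p⁆ = 0 := by
  simpa using lie_apply_add_lie_apply_mem f (A := ⊥) (by simpa using hf) p q

theorem lie_apply_eq_zero_of_apply_eq_zero (hf : ∀ q, ⁅f q, q⁆ = 0) {p : M} (hp : f p = 0)
    (q : M) : ⁅f q, p⁆ = 0 := by
  simpa [hp] using lie_apply_add_lie_apply_eq_zero hf p q

theorem isLieBracket_lie_apply [LieModule k L M] (hf : ∀ q, ⁅f q, q⁆ = 0) :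
    IsLieBracket (k := k) fun p q : M => ⁅f p, q⁆ := by
  refine ⟨fun p p' q => ?_, fun p q q' => lie_add _ _ _, fun c p q => ?_,
    fun c p q => lie_smul _ _ _, hf, fun p q r => ?_⟩
  · beta_reduce
    rw [map_add, add_lie]
  · beta_reduce
    rw [map_smul, smul_lie]
  · beta_reduce
    rw [LieModuleHom.map_lie, leibniz_lie]

end LieApply

section SelfLieSpan

variable {k L M : Type*} [CommRing k] [LieRing L] [LieAlgebra k L]
  [AddCommGroup M] [Module k M] [LieRingModule L M] [LieModule k L M]
  (f : M →ₗ⁅k,L⁆ L)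

theorem lie_mem_span_lie_apply_self (x : L) {m : M}
    (hm : m ∈ Submodule.span k {m | ∃ n, m = ⁅f n, n⁆}) :
    ⁅x, m⁆ ∈ Submodule.span k {m | ∃ n, m = ⁅f n, n⁆} := by
  induction hm using Submodule.span_induction with
  | mem a ha =>
    obtain ⟨n, rfl⟩ := ha
    rw [leibniz_lie, ← LieModuleHom.map_lie]
    refine lie_apply_add_lie_apply_mem f (fun n => ?_) _ _
    exact Submodule.subset_span ⟨n, rfl⟩
  | zero => simp
  | add a b _ _ ha hb => simpa only [lie_add] using add_mem ha hb
  | smul c a _ ha => simpa only [lie_smul] using Submodule.smul_mem _ c ha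

def selfLieSpan : LieSubmodule k L M where
  toSubmodule := Submodule.span k {m | ∃ n, m = ⁅f n, n⁆}
  lie_mem := lie_mem_span_lie_apply_self f _

theorem lie_apply_self_mem_selfLieSpan (n : M) : ⁅f n, n⁆ ∈ selfLieSpan f :=
  Submodule.subset_span ⟨n, rfl⟩

theorem selfLieSpan_le_ker : selfLieSpan f ≤ f.ker :=
  Submodule.span_le.mpr <| by
    rintro _ ⟨n, rfl⟩
    simp

end SelfLieSpan

namespace LieSubmodule.Quotient

variable {k L M N : Type*} [CommRing k] [LieRing L] [LieAlgebra k L]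
  [AddCommGroup M] [Module k M] [LieRingModule L M] [LieModule k L M]
  [AddCommGroup N] [Module k N] [LieRingModule L N]
  (A : LieSubmodule k L M) (f : M →ₗ⁅k,L⁆ N)

def lift (hA : A ≤ f.ker) : M ⧸ A →ₗ⁅k,L⁆ N :=
  { A.toSubmodule.liftQ f.toLinearMap hA with
    map_lie' := fun {x q} => by
      obtain ⟨m, rfl⟩ := surjective_mk' A q
      exact f.map_lie x m }

@[simp]
theorem lift_mk' (hA : A ≤ f.ker) (m : M) : lift A f hA (mk' A m) = f m :=
  rfl

theorem lie_lift_apply_self {f : M →ₗ⁅k,L⁆ L} (hA : A ≤ f.ker) (hf : ∀ n, ⁅f n, n⁆ ∈ A)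
    (q : M ⧸ A) : ⁅lift A f hA q, q⁆ = 0 := by
  obtain ⟨m, rfl⟩ := surjective_mk' A q
  rw [lift_mk', ← LieModuleHom.map_lie, mk_eq_zero]
  exact hf m

end LieSubmodule.Quotient

theorem stmt7_general {k : Type*} [CommRing k]
    {L : Type*} [LieRing L] [LieAlgebra k L]
    {M : Type*} [AddCommGroup M] [Module k M] [LieRingModule L M] [LieModule k L M]
    (l : M →ₗ[k] L)
    (hl : ∀ (x : L) (m : M), l ⁅x, m⁆ = ⁅x, l m⁆)
    (hsurj : Function.Surjective l)
    (A : Submodule k M)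
    (hA : A = Submodule.span k {m | ∃ n : M, m = ⁅l n, n⁆}) :
    -- A(M) is an L-submodule of M
    (∀ x : L, ∀ m ∈ A, ⁅x, m⁆ ∈ A) ∧
    -- μ : M/A(M) → L induced by l, the bracket [p,q] = μ(p)·q on M/A(M)
    (∃ μ : (M ⧸ A) →ₗ[k] L,
      (∀ m : M, μ (Submodule.Quotient.mk m) = l m) ∧
      Function.Surjective μ ∧
      ∃ B : (M ⧸ A) → (M ⧸ A) → (M ⧸ A),
        (∀ m n : M, B (Submodule.Quotient.mk m) (Submodule.Quotient.mk n)
          = Submodule.Quotient.mk ⁅l m, n⁆) ∧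
        -- Q is a Lie algebra
        IsLieBracket (k := k) B ∧
        -- μ is a Lie algebra homomorphism
        (∀ p q, μ (B p q) = ⁅μ p, μ q⁆) ∧
        -- the kernel of μ is central in Q
        (∀ p, μ p = 0 → ∀ q, B p q = 0 ∧ B q p = 0)) := by
  let f : M →ₗ⁅k,L⁆ L := { l with map_lie' := hl _ _ }
  obtain rfl : A = (selfLieSpan f).toSubmodule := hA
  let μ := LieSubmodule.Quotient.lift (selfLieSpan f) f (selfLieSpan_le_ker f)
  have hμ : ∀ q, ⁅μ q, q⁆ = 0 :=
    LieSubmodule.Quotient.lie_lift_apply_self _ _ (lie_apply_self_mem_selfLieSpan f)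
  -- `M ⧸ A` carries the `L`-action only when read as a quotient by the Lie submodule.
  let B : M ⧸ selfLieSpan f → M ⧸ selfLieSpan f → M ⧸ selfLieSpan f := fun p q => ⁅μ p, q⁆
  refine ⟨fun x m hm => (selfLieSpan f).lie_mem hm, μ.toLinearMap, fun m => rfl, fun x => ?_,
    B, fun m n => rfl, isLieBracket_lie_apply (M := M ⧸ selfLieSpan f) hμ,
    fun p q => μ.map_lie _ _, fun (p : M ⧸ selfLieSpan f) hp (q : M ⧸ selfLieSpan f) =>
      ⟨?_, lie_apply_eq_zero_of_apply_eq_zero hμ hp q⟩⟩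
  · obtain ⟨m, rfl⟩ := hsurj x
    exact ⟨Submodule.Quotient.mk m, rfl⟩
  · show ⁅μ p, q⁆ = 0
    rw [show μ p = 0 from hp, zero_lie]

/-- If `M` is a module over a Lie algebra `L` and `l : M → L` is
an `L`-module epimorphism onto the adjoint module, then
`A(M) = span{l(m)·m}` is an `L`-submodule of `M`, the quotient `Q = M/A(M)`
carries a Lie algebra bracket `[p,q] = μ(p)·q` where `μ : Q → L` is induced by
`l`, and `μ` is a central extension. -/
theorem stmt7 {k : Type*} [CommRing k]
    (htor2 : ∀ x : k, 2 * x = 0 → x = 0) (htor3 : ∀ x : k, 3 * x = 0 → x = 0)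
    {L : Type*} [LieRing L] [LieAlgebra k L]
    {M : Type*} [AddCommGroup M] [Module k M] [LieRingModule L M] [LieModule k L M]
    (l : M →ₗ[k] L)
    (hl : ∀ (x : L) (m : M), l ⁅x, m⁆ = ⁅x, l m⁆)
    (hsurj : Function.Surjective l)
    (A : Submodule k M)
    (hA : A = Submodule.span k {m | ∃ n : M, m = ⁅l n, n⁆}) :
    -- A(M) is an L-submodule of M
    (∀ x : L, ∀ m ∈ A, ⁅x, m⁆ ∈ A) ∧
    -- μ : M/A(M) → L induced by l, the bracket [p,q] = μ(p)·q on M/A(M)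
    (∃ μ : (M ⧸ A) →ₗ[k] L,
      (∀ m : M, μ (Submodule.Quotient.mk m) = l m) ∧
      Function.Surjective μ ∧
      ∃ B : (M ⧸ A) → (M ⧸ A) → (M ⧸ A),
        (∀ m n : M, B (Submodule.Quotient.mk m) (Submodule.Quotient.mk n)
          = Submodule.Quotient.mk ⁅l m, n⁆) ∧
        -- Q is a Lie algebra
        IsLieBracket (k := k) B ∧
        -- μ is a Lie algebra homomorphism
        (∀ p q, μ (B p q) = ⁅μ p, μ q⁆) ∧
        -- the kernel of μ is central in Q
        (∀ p, μ p = 0 → ∀ q, B p q = 0 ∧ B q p = 0)) :=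
  stmt7_general l hl hsurj A hA
end

section
/- Let T be a Jordan triple system and P = (T,T) the associated Jordan pair. Then the map κ̂ on ûTKK(P) = T₋ ⊕ ⟨T,T⟩ ⊕ T₊ defined by κ̂(a₋ + ⟨c,d⟩ + b₊) = b₋ - ⟨d,c⟩ + a₊ is a well-defined anti-graded involution of the Lie algebra ûTKK(P): a Lie algebra automorphism of order 2 taking the component of degree i to the component of degree -i. -/
/-!
On `⟨T,T⟩` the map `κ̂` is induced by `c ⊗ d ↦ -(d ⊗ c)`, which sends the defining relation of `A`
indexed by `(a, c, b, d)` to the one indexed by `(b, d, a, c)`; so it descends to the quotient, and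
swapping the outer components makes it an involution. Both `(p, q) ↦ κ̂ [p, q]` and
`(p, q) ↦ [κ̂ p, κ̂ q]` are bilinear, so they agree as soon as they agree on pairs of the spanning
elements `a₋`, `⟨c, d⟩`, `b₊`, where this is read off from the bracket formulas.
-/

open scoped TensorProduct

namespace IsLieBracket

variable {k V : Type*} [CommRing k] [AddCommGroup V] [Module k V] {B : V → V → V}

def toBilin (hB : IsLieBracket (k := k) B) : V →ₗ[k] V →ₗ[k] V :=
  LinearMap.mk₂ k B hB.1 hB.2.2.1 hB.2.1 hB.2.2.2.1

@[simp]
lemma toBilin_apply (hB : IsLieBracket (k := k) B) (x y : V) : hB.toBilin x y = B x y := rfl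

lemma neg_left (hB : IsLieBracket (k := k) B) (x y : V) : B (-x) y = -B x y :=
  hB.toBilin.map_neg₂ x y

lemma neg_right (hB : IsLieBracket (k := k) B) (x y : V) : B x (-y) = -B x y :=
  (hB.toBilin x).map_neg y

lemma skew (hB : IsLieBracket (k := k) B) (x y : V) : B y x = -B x y := by
  have h := hB.2.2.2.2.1 (x + y)
  rw [hB.1, hB.2.1, hB.2.1, hB.2.2.2.2.1, hB.2.2.2.2.1, zero_add, add_zero] at h
  exact eq_neg_of_add_eq_zero_right h

end IsLieBracket

namespace TKK

variable {k T : Type*} [CommRing k] [AddCommGroup T] [Module k T]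

def negFlip : T ⊗[k] T →ₗ[k] T ⊗[k] T := -(TensorProduct.comm k T T).toLinearMap

@[simp]
lemma negFlip_tmul (c d : T) : negFlip (c ⊗ₜ[k] d) = -(d ⊗ₜ[k] c) := rfl

lemma negFlip_negFlip (x : T ⊗[k] T) : negFlip (negFlip x) = x := by
  induction x using TensorProduct.induction_on with
  | zero => simp
  | tmul c d => simp
  | add x y hx hy => rw [map_add, map_add, hx, hy]

def relations (t : T →ₗ[k] T →ₗ[k] T →ₗ[k] T) : Submodule k (T ⊗[k] T) :=
  Submodule.span k {x | ∃ a c b d : T,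
      x = (t a b c ⊗ₜ[k] d - c ⊗ₜ[k] t b a d) + (t c d a ⊗ₜ[k] b - a ⊗ₜ[k] t d c b)}

lemma relations_le_comap_negFlip (t : T →ₗ[k] T →ₗ[k] T →ₗ[k] T) :
    relations t ≤ (relations t).comap negFlip := by
  rw [relations, Submodule.span_le]
  rintro _ ⟨a, c, b, d, rfl⟩
  refine Submodule.subset_span ⟨b, d, a, c, ?_⟩
  simp only [map_add, map_sub, negFlip_tmul]
  abel

variable {A : Submodule k (T ⊗[k] T)}

def kappa (hA : A ≤ A.comap negFlip) :
    T × (T ⊗[k] T ⧸ A) × T →ₗ[k] T × (T ⊗[k] T ⧸ A) × T :=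
  (LinearMap.snd k _ T ∘ₗ LinearMap.snd k T _).prod
    ((A.mapQ A negFlip hA ∘ₗ LinearMap.fst k _ T ∘ₗ LinearMap.snd k T _).prod
      (LinearMap.fst k T _))

variable (hA : A ≤ A.comap negFlip)

lemma kappa_apply (a : T) (X : T ⊗[k] T ⧸ A) (b : T) :
    kappa hA (a, X, b) = (b, A.mapQ A negFlip hA X, a) := rfl

lemma kappa_minus (a : T) : kappa hA (a, 0, 0) = (0, 0, a) := by
  simp [kappa_apply]

lemma kappa_plus (b : T) : kappa hA (0, 0, b) = (b, 0, 0) := by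
  simp [kappa_apply]

lemma kappa_pair (c d : T) :
    kappa hA (0, Submodule.Quotient.mk (c ⊗ₜ[k] d), 0) =
      (0, -Submodule.Quotient.mk (d ⊗ₜ[k] c), 0) := by
  simp [kappa_apply, Submodule.Quotient.mk_neg]

lemma zero_neg_zero (X : T ⊗[k] T ⧸ A) : ((0 : T), -X, (0 : T)) = -(0, X, 0) := by simp

lemma kappa_kappa (p : T × (T ⊗[k] T ⧸ A) × T) : kappa hA (kappa hA p) = p := by
  obtain ⟨a, X, b⟩ := p
  obtain ⟨x, rfl⟩ := Submodule.Quotient.mk_surjective A X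
  simp [kappa_apply, negFlip_negFlip]

variable (A) in
def generators : Set (T × (T ⊗[k] T ⧸ A) × T) :=
  {p | (∃ a, p = (a, 0, 0)) ∨ (∃ c d, p = (0, Submodule.Quotient.mk (c ⊗ₜ[k] d), 0)) ∨
    ∃ b, p = (0, 0, b)}

variable (A) in
lemma span_generators : Submodule.span k (generators A) = ⊤ := by
  refine Submodule.eq_top_iff'.2 fun ⟨a, X, b⟩ => ?_
  obtain ⟨x, rfl⟩ := Submodule.Quotient.mk_surjective A X
  have hmid : ((0 : T), Submodule.Quotient.mk x, (0 : T)) ∈ Submodule.span k (generators A) := by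
    induction x using TensorProduct.induction_on with
    | zero => simp only [Submodule.Quotient.mk_zero, Prod.mk_zero_zero, Submodule.zero_mem]
    | tmul c d => exact Submodule.subset_span (Or.inr (Or.inl ⟨c, d, rfl⟩))
    | add x y hx hy => simpa using Submodule.add_mem _ hx hy
  have hsplit : (a, Submodule.Quotient.mk x, b) = ((a, 0, 0) +
      ((0, Submodule.Quotient.mk x, 0) + (0, 0, b)) : T × (T ⊗[k] T ⧸ A) × T) := by simp
  rw [hsplit]
  exact Submodule.add_mem _ (Submodule.subset_span (Or.inl ⟨a, rfl⟩))
    (Submodule.add_mem _ hmid (Submodule.subset_span (Or.inr (Or.inr ⟨b, rfl⟩))))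

lemma ext₂_of_generators {W : Type*} [AddCommGroup W] [Module k W]
    {F G : T × (T ⊗[k] T ⧸ A) × T →ₗ[k] T × (T ⊗[k] T ⧸ A) × T →ₗ[k] W}
    (h : ∀ p ∈ generators A, ∀ q ∈ generators A, F p q = G p q) : F = G :=
  LinearMap.ext_on (span_generators A) fun p hp =>
    LinearMap.ext_on (span_generators A) fun q hq => h p hp q hq

end TKK

theorem stmt10_general {k : Type*} [CommRing k]
    {T : Type*} [AddCommGroup T] [Module k T]
    (t : T →ₗ[k] T →ₗ[k] T →ₗ[k] T)
    -- A(T ⊗ T) and ⟨T,T⟩ = (T⊗T)/A(T⊗T)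
    (A : Submodule k (T ⊗[k] T))
    (hA : A = Submodule.span k {x | ∃ a c b d : T,
      x = (t a b c ⊗ₜ[k] d - c ⊗ₜ[k] t b a d)
        + (t c d a ⊗ₜ[k] b - a ⊗ₜ[k] t d c b)})
    -- the Lie bracket of ûTKK(P) = T₋ × ⟨T,T⟩ × T₊, specified on generators
    (B : (T × ((T ⊗[k] T) ⧸ A) × T) → (T × ((T ⊗[k] T) ⧸ A) × T) →
         (T × ((T ⊗[k] T) ⧸ A) × T))
    (hB : IsLieBracket (k := k) B)
    (hBmm : ∀ a c : T, B (a, 0, 0) (c, 0, 0) = 0)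
    (hBpp : ∀ b d : T, B (0, 0, b) (0, 0, d) = 0)
    (hBmp : ∀ a b : T, B (a, 0, 0) (0, 0, b)
      = (0, Submodule.Quotient.mk (a ⊗ₜ[k] b), 0))
    (hBzm : ∀ a b c : T, B (0, Submodule.Quotient.mk (a ⊗ₜ[k] b), 0) (c, 0, 0)
      = (t a b c, 0, 0))
    (hBzp : ∀ a b d : T, B (0, Submodule.Quotient.mk (a ⊗ₜ[k] b), 0) (0, 0, d)
      = (0, 0, -(t b a d)))
    (hBzz : ∀ a b c d : T,
      B (0, Submodule.Quotient.mk (a ⊗ₜ[k] b), 0)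
        (0, Submodule.Quotient.mk (c ⊗ₜ[k] d), 0)
      = (0, Submodule.Quotient.mk (t a b c ⊗ₜ[k] d)
            - Submodule.Quotient.mk (c ⊗ₜ[k] t b a d), 0)) :
    -- κ̂ exists as a linear map, is an involution, is anti-graded, and is a
    -- Lie algebra automorphism
    ∃ κ : (T × ((T ⊗[k] T) ⧸ A) × T) →ₗ[k] (T × ((T ⊗[k] T) ⧸ A) × T),
      (∀ a : T, κ (a, 0, 0) = (0, 0, a)) ∧
      (∀ b : T, κ (0, 0, b) = (b, 0, 0)) ∧
      (∀ c d : T, κ (0, Submodule.Quotient.mk (c ⊗ₜ[k] d), 0)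
        = (0, -Submodule.Quotient.mk (d ⊗ₜ[k] c), 0)) ∧
      (∀ X : (T ⊗[k] T) ⧸ A, (κ (0, X, 0)).1 = 0 ∧ (κ (0, X, 0)).2.2 = 0) ∧
      (∀ p, κ (κ p) = p) ∧
      (∀ p q, κ (B p q) = B (κ p) (κ q)) := by
  have hσ : A ≤ A.comap TKK.negFlip := hA ▸ TKK.relations_le_comap_negFlip t
  refine ⟨TKK.kappa hσ, TKK.kappa_minus hσ, TKK.kappa_plus hσ, TKK.kappa_pair hσ,
    fun _ => ⟨rfl, rfl⟩, TKK.kappa_kappa hσ, fun p q => ?_⟩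
  have hBmz : ∀ a b c : T, B (c, 0, 0) (0, Submodule.Quotient.mk (a ⊗ₜ[k] b), 0)
      = (-t a b c, 0, 0) := by
    intro a b c; rw [hB.skew, hBzm]; simp
  have hBpz : ∀ a b d : T, B (0, 0, d) (0, Submodule.Quotient.mk (a ⊗ₜ[k] b), 0)
      = (0, 0, t b a d) := by
    intro a b d; rw [hB.skew, hBzp]; simp
  have hBpm : ∀ a b : T, B (0, 0, b) (a, 0, 0)
      = -(0, Submodule.Quotient.mk (a ⊗ₜ[k] b), 0) := by
    intro a b; rw [hB.skew, hBmp]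
  suffices hB.toBilin.compr₂ (TKK.kappa hσ) = hB.toBilin.compl₁₂ (TKK.kappa hσ) (TKK.kappa hσ)
    from LinearMap.congr_fun₂ this p q
  refine TKK.ext₂_of_generators ?_
  rintro _ (⟨a, rfl⟩ | ⟨a, b, rfl⟩ | ⟨a, rfl⟩) _ (⟨c, rfl⟩ | ⟨c, d, rfl⟩ | ⟨c, rfl⟩)
  all_goals
    simp only [LinearMap.compr₂_apply, LinearMap.compl₁₂_apply, IsLieBracket.toBilin_apply,
      TKK.kappa_minus, TKK.kappa_plus, TKK.kappa_pair, TKK.zero_neg_zero,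
      hB.neg_left, hB.neg_right]
    simp [hBmm, hBpp, hBmp, hBzm, hBzp, hBzz, hBmz, hBpz, hBpm, TKK.kappa_apply, neg_add_eq_sub]

/-- For a Jordan triple system `T` and the associated Jordan
pair `P = (T,T)`, the map `κ̂(a₋ + ⟨c,d⟩ + b₊) = b₋ - ⟨d,c⟩ + a₊` is a
well-defined anti-graded involution of the Lie algebra `ûTKK(P)`: a Lie
algebra automorphism of order 2 taking degree `i` to degree `-i`. -/
theorem stmt10 {k : Type*} [CommRing k]
    (htor2 : ∀ x : k, 2 * x = 0 → x = 0) (htor3 : ∀ x : k, 3 * x = 0 → x = 0)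
    {T : Type*} [AddCommGroup T] [Module k T]
    (t : T →ₗ[k] T →ₗ[k] T →ₗ[k] T)
    (hsymm : ∀ a b c, t a b c = t c b a)
    (hjid : ∀ a b c d x, t a b (t c d x) - t c d (t a b x)
      = t (t a b c) d x - t c (t b a d) x)
    -- A(T ⊗ T) and ⟨T,T⟩ = (T⊗T)/A(T⊗T)
    (A : Submodule k (T ⊗[k] T))
    (hA : A = Submodule.span k {x | ∃ a c b d : T,
      x = (t a b c ⊗ₜ[k] d - c ⊗ₜ[k] t b a d)
        + (t c d a ⊗ₜ[k] b - a ⊗ₜ[k] t d c b)})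
    -- the Lie bracket of ûTKK(P) = T₋ × ⟨T,T⟩ × T₊, specified on generators
    (B : (T × ((T ⊗[k] T) ⧸ A) × T) → (T × ((T ⊗[k] T) ⧸ A) × T) →
         (T × ((T ⊗[k] T) ⧸ A) × T))
    (hB : IsLieBracket (k := k) B)
    (hBmm : ∀ a c : T, B (a, 0, 0) (c, 0, 0) = 0)
    (hBpp : ∀ b d : T, B (0, 0, b) (0, 0, d) = 0)
    (hBmp : ∀ a b : T, B (a, 0, 0) (0, 0, b)
      = (0, Submodule.Quotient.mk (a ⊗ₜ[k] b), 0))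
    (hBzm : ∀ a b c : T, B (0, Submodule.Quotient.mk (a ⊗ₜ[k] b), 0) (c, 0, 0)
      = (t a b c, 0, 0))
    (hBzp : ∀ a b d : T, B (0, Submodule.Quotient.mk (a ⊗ₜ[k] b), 0) (0, 0, d)
      = (0, 0, -(t b a d)))
    (hBzz : ∀ a b c d : T,
      B (0, Submodule.Quotient.mk (a ⊗ₜ[k] b), 0)
        (0, Submodule.Quotient.mk (c ⊗ₜ[k] d), 0)
      = (0, Submodule.Quotient.mk (t a b c ⊗ₜ[k] d)
            - Submodule.Quotient.mk (c ⊗ₜ[k] t b a d), 0)) :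
    -- κ̂ exists as a linear map, is an involution, is anti-graded, and is a
    -- Lie algebra automorphism
    ∃ κ : (T × ((T ⊗[k] T) ⧸ A) × T) →ₗ[k] (T × ((T ⊗[k] T) ⧸ A) × T),
      (∀ a : T, κ (a, 0, 0) = (0, 0, a)) ∧
      (∀ b : T, κ (0, 0, b) = (b, 0, 0)) ∧
      (∀ c d : T, κ (0, Submodule.Quotient.mk (c ⊗ₜ[k] d), 0)
        = (0, -Submodule.Quotient.mk (d ⊗ₜ[k] c), 0)) ∧
      (∀ X : (T ⊗[k] T) ⧸ A, (κ (0, X, 0)).1 = 0 ∧ (κ (0, X, 0)).2.2 = 0) ∧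
      (∀ p, κ (κ p) = p) ∧
      (∀ p q, κ (B p q) = B (κ p) (κ q)) :=
  stmt10_general t A hA B hB hBmm hBpp hBmp hBzm hBzp hBzz
end

section
/- Let J be a unital linear Jordan algebra over a field k of characteristic ≠ 2,3, viewed as the Jordan pair (J,J). Then the submodule A(J⊗J) ⊆ J⊗J (spanned by all ({a,b,c}⊗d - c⊗{b,a,d}) + ({c,d,a}⊗b - a⊗{d,c,b})) equals the k-span of the elements a²⊗a - 1⊗a³ for a ∈ J. -/
/-!
Work modulo a submodule `S ⊆ J ⊗ J` through the bilinear map `B u v = [u ⊗ v]` into `(J ⊗ J) ⧸ S`.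
If `B (a²) a = B 1 (a³)` for all `a`, polarizing this cubic relation (2 is invertible) gives
`B (xy) z + B (yz) x + B (zx) y = B 1 ((xy)z + (yz)x + (zx)y)`, and putting `1` into it gives
`B u v + B v u = 2 B 1 (uv)`. These two relations reduce every generator of `A(J ⊗ J)` to
`B 1 ({abc}d - {bad}c + {cda}b - {dcb}a)`, which vanishes by the linearized Jordan identity.
Conversely, `3 (a² ⊗ a - 1 ⊗ a³)` is a combination of three generators of `A(J ⊗ J)`.
-/

open scoped TensorProduct

theorem perm_sum_eq_zero_of_diag_eq_zero {V W : Type*} [AddCommGroup V] [AddCommGroup W]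
    (C : V → V → V → W)
    (hadd₁ : ∀ x x' y z, C (x + x') y z = C x y z + C x' y z)
    (hadd₂ : ∀ x y y' z, C x (y + y') z = C x y z + C x y' z)
    (hadd₃ : ∀ x y z z', C x y (z + z') = C x y z + C x y z')
    (hdiag : ∀ x, C x x x = 0) (x y z : V) :
    C x y z + C x z y + C y x z + C y z x + C z x y + C z y x = 0 := by
  have hxyz := hdiag (x + y + z)
  have hxy := hdiag (x + y)
  have hyz := hdiag (y + z)
  have hxz := hdiag (x + z)
  simp only [hadd₁, hadd₂, hadd₃, hdiag] at hxyz hxy hyz hxz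
  linear_combination (norm := abel) hxyz - hxy - hyz - hxz

namespace JordanPair

variable {k J M : Type*} [Field k] [AddCommGroup J] [Module k J] [AddCommGroup M] [Module k M]
  (m : J →ₗ[k] J →ₗ[k] J)

def jordanTriple (a b c : J) : J := m (m a b) c + m a (m b c) - m b (m c a)

theorem linearized_jordan_identity (h2 : (2 : k) ≠ 0) (hcomm : ∀ a b, m a b = m b a)
    (hjordan : ∀ a b, m (m (m a a) b) a = m (m a a) (m b a)) (w x y z : J) :
    m (m (m x y) w) z + m (m (m y z) w) x + m (m (m z x) w) y
      = m (m x y) (m z w) + m (m y z) (m x w) + m (m z x) (m y w) := by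
  have hsum := perm_sum_eq_zero_of_diag_eq_zero
    (fun x y z => m (m (m x y) w) z - m (m x y) (m w z))
    (by intros; simp only [map_add, LinearMap.add_apply]; abel)
    (by intros; simp only [map_add, LinearMap.add_apply]; abel)
    (by intros; simp only [map_add]; abel)
    (fun x => sub_eq_zero.2 (hjordan x w)) x y z
  rw [← sub_eq_zero, ← smul_eq_zero_iff_right h2, ← hsum]
  -- `hcomm` is permutative, so `simp` uses it only to sort the factors: a normal form modulo
  -- commutativity, here and below.
  simp only [hcomm]
  module

theorem jordanTriple_identity (h2 : (2 : k) ≠ 0) (hcomm : ∀ a b, m a b = m b a)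
    (hjordan : ∀ a b, m (m (m a a) b) a = m (m a a) (m b a)) (a b c d : J) :
    m (jordanTriple m a b c) d - m (jordanTriple m b a d) c + m (jordanTriple m c d a) b
      - m (jordanTriple m d c b) a = 0 := by
  have hlin := linearized_jordan_identity m h2 hcomm hjordan
  linear_combination (norm := skip) hlin a b c d - hlin b a c d + hlin c a b d - hlin d a b c
  simp only [jordanTriple, map_add, map_sub, LinearMap.add_apply, LinearMap.sub_apply, hcomm]
  abel

variable (B : J →ₗ[k] J →ₗ[k] M) (e : J)

theorem cyclic_sum_eq (h2 : (2 : k) ≠ 0) (hcomm : ∀ a b, m a b = m b a)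
    (hB : ∀ a, B (m a a) a = B e (m (m a a) a)) (x y z : J) :
    B (m x y) z + B (m y z) x + B (m z x) y
      = B e (m (m x y) z + m (m y z) x + m (m z x) y) := by
  have hsum := perm_sum_eq_zero_of_diag_eq_zero (fun x y z => B (m x y) z - B e (m (m x y) z))
    (by intros; simp only [map_add, LinearMap.add_apply]; abel)
    (by intros; simp only [map_add, LinearMap.add_apply]; abel)
    (by intros; simp only [map_add]; abel)
    (fun x => sub_eq_zero.2 (hB x)) x y z
  rw [← sub_eq_zero, ← smul_eq_zero_iff_right h2, ← hsum]
  simp only [map_add, hcomm]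
  module

theorem apply_add_apply_swap (h2 : (2 : k) ≠ 0) (hcomm : ∀ a b, m a b = m b a)
    (hone : ∀ a, m e a = a) (hB : ∀ a, B (m a a) a = B e (m (m a a) a)) (x y : J) :
    B x y + B y x = (2 : k) • B e (m x y) := by
  have hone' : ∀ a, m a e = a := fun a => hcomm a e ▸ hone a
  have hxy_e := cyclic_sum_eq m B e h2 hcomm hB (m x y) e e
  have hx_y_e := cyclic_sum_eq m B e h2 hcomm hB x y e
  simp only [hone, hone', hcomm y x, map_add] at hxy_e hx_y_e
  have hswap : B (m x y) e = B e (m x y) := by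
    rw [← smul_right_inj h2]
    linear_combination (norm := module) hxy_e
  linear_combination (norm := module) hx_y_e - hswap

def pairRelator (a b c d : J) : M :=
  (B (jordanTriple m a b c) d - B c (jordanTriple m b a d))
    + (B (jordanTriple m c d a) b - B a (jordanTriple m d c b))

theorem pairRelator_compr₂ {N : Type*} [AddCommGroup N] [Module k N] (f : M →ₗ[k] N)
    (a b c d : J) : pairRelator m (B.compr₂ f) a b c d = f (pairRelator m B a b c d) := by
  simp only [pairRelator, LinearMap.compr₂_apply, map_add, map_sub]

theorem pairRelator_eq (h2 : (2 : k) ≠ 0) (hcomm : ∀ a b, m a b = m b a)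
    (hone : ∀ a, m e a = a) (hB : ∀ a, B (m a a) a = B e (m (m a a) a)) (a b c d : J) :
    pairRelator m B a b c d = B e (m (jordanTriple m a b c) d - m (jordanTriple m b a d) c
      + m (jordanTriple m c d a) b - m (jordanTriple m d c b) a) := by
  have cyc := cyclic_sum_eq m B e h2 hcomm hB
  have swap := apply_add_apply_swap m B e h2 hcomm hone hB
  linear_combination (norm := skip)
    cyc (m a b) c d + cyc (m c d) a b + cyc (m b c) a d + cyc (m a d) b c
      - cyc (m a c) b d - cyc (m b d) a c
      - swap c (m (m a b) d) - swap c (m (m a d) b) + swap c (m (m b d) a)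
      - swap a (m (m c d) b) - swap a (m (m b c) d) + swap a (m (m b d) c)
      - swap (m a b) (m c d) - swap (m a d) (m b c) + swap (m a c) (m b d)
  simp only [pairRelator, jordanTriple, map_add, map_sub, LinearMap.add_apply,
    LinearMap.sub_apply, hcomm]
  module

theorem pairRelator_eq_zero (h2 : (2 : k) ≠ 0) (hcomm : ∀ a b, m a b = m b a)
    (hjordan : ∀ a b, m (m (m a a) b) a = m (m a a) (m b a))
    (hone : ∀ a, m e a = a) (hB : ∀ a, B (m a a) a = B e (m (m a a) a)) (a b c d : J) :
    pairRelator m B a b c d = 0 := by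
  rw [pairRelator_eq m B e h2 hcomm hone hB, jordanTriple_identity m h2 hcomm hjordan, map_zero]

theorem cube_relation_of_pairRelator_eq_zero (h3 : (3 : k) ≠ 0) (hcomm : ∀ a b, m a b = m b a)
    (hone : ∀ a, m e a = a) (hP : ∀ a b c d, pairRelator m B a b c d = 0) (a : J) :
    B (m a a) a = B e (m (m a a) a) := by
  have hone' : ∀ a, m a e = a := fun a => hcomm a e ▸ hone a
  rw [← sub_eq_zero, ← smul_eq_zero_iff_right h3]
  linear_combination (norm := skip) (2 : k) • hP a a e a - hP a e a a + hP (m (m a a) a) e e e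
  simp only [pairRelator, jordanTriple, map_add, map_sub, LinearMap.add_apply,
    LinearMap.sub_apply, hone, hone', hcomm]
  module

variable (S : Submodule k (J ⊗[k] J))

theorem pairRelator_tmul_mem (h2 : (2 : k) ≠ 0) (hcomm : ∀ a b, m a b = m b a)
    (hjordan : ∀ a b, m (m (m a a) b) a = m (m a a) (m b a)) (hone : ∀ a, m e a = a)
    (hS : ∀ a, m a a ⊗ₜ[k] a - e ⊗ₜ[k] m (m a a) a ∈ S) (a b c d : J) :
    pairRelator m (TensorProduct.mk k J J) a b c d ∈ S := by
  rw [← Submodule.Quotient.mk_eq_zero, ← Submodule.mkQ_apply, ← pairRelator_compr₂]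
  exact pairRelator_eq_zero m _ e h2 hcomm hjordan hone
    (fun a => (Submodule.Quotient.eq S).2 (hS a)) a b c d

theorem cube_tmul_mem (h3 : (3 : k) ≠ 0) (hcomm : ∀ a b, m a b = m b a) (hone : ∀ a, m e a = a)
    (hS : ∀ a b c d, pairRelator m (TensorProduct.mk k J J) a b c d ∈ S) (a : J) :
    m a a ⊗ₜ[k] a - e ⊗ₜ[k] m (m a a) a ∈ S := by
  rw [← Submodule.Quotient.mk_eq_zero, Submodule.Quotient.mk_sub, sub_eq_zero]
  refine cube_relation_of_pairRelator_eq_zero m ((TensorProduct.mk k J J).compr₂ S.mkQ) e h3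
    hcomm hone (fun a b c d => ?_) a
  rw [pairRelator_compr₂]
  exact (Submodule.Quotient.mk_eq_zero S).2 (hS a b c d)

end JordanPair

open JordanPair

/-- For a unital linear Jordan algebra `J` over a field of
characteristic ≠ 2,3, viewed as the Jordan pair `(J,J)`, the submodule
`A(J⊗J)` (spanned by `({a,b,c}⊗d - c⊗{b,a,d}) + ({c,d,a}⊗b - a⊗{d,c,b})`)
equals the span of the elements `a²⊗a - 1⊗a³`. -/
theorem stmt12 {k : Type*} [Field k]
    (hchar2 : (2 : k) ≠ 0) (hchar3 : (3 : k) ≠ 0)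
    {J : Type*} [AddCommGroup J] [Module k J]
    (m : J →ₗ[k] J →ₗ[k] J)
    (hcomm : ∀ a b, m a b = m b a)
    (hjordan : ∀ a b, m (m (m a a) b) a = m (m a a) (m b a))
    (one : J) (hone : ∀ a, m one a = a)
    (t : J → J → J → J)
    (ht : ∀ a b c, t a b c = m (m a b) c + m a (m b c) - m b (m c a)) :
    Submodule.span k {x : J ⊗[k] J | ∃ a c b d : J,
        x = (t a b c ⊗ₜ[k] d - c ⊗ₜ[k] t b a d)
          + (t c d a ⊗ₜ[k] b - a ⊗ₜ[k] t d c b)}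
      = Submodule.span k {x : J ⊗[k] J | ∃ a : J,
          x = m a a ⊗ₜ[k] a - one ⊗ₜ[k] m (m a a) a} := by
  obtain rfl : t = jordanTriple m := funext fun a => funext fun b => funext (ht a b)
  apply le_antisymm <;> rw [Submodule.span_le]
  · rintro _ ⟨a, c, b, d, rfl⟩
    refine pairRelator_tmul_mem m one _ hchar2 hcomm hjordan hone
      (fun a => Submodule.subset_span ?_) a b c d
    exact ⟨a, rfl⟩
  · rintro _ ⟨a, rfl⟩
    refine cube_tmul_mem m one _ hchar3 hcomm hone
      (fun a b c d => Submodule.subset_span ?_) a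
    exact ⟨a, c, b, d, rfl⟩
end

section
/- Let P be a Jordan pair, L a 3-graded Lie algebra, and γ = (γ₋, γ₊) : P → (L₋₁, L₁) a Jordan pair homomorphism into the Jordan pair induced on (L₋₁, L₁). Then there is a unique graded Lie algebra homomorphism γ̂ : ûTKK(P) → L with γ̂|_{P₋} = γ₋ and γ̂|_{P₊} = γ₊; it is given by γ̂(a + Σᵢ⟨cᵢ,dᵢ⟩ + b) = γ₋(a) + Σᵢ[γ₋(cᵢ), γ₊(dᵢ)] + γ₊(b). -/
open scoped TensorProduct

/-- A 3-grading `L = Lm ⊕ Lz ⊕ Lp` (degrees -1, 0, 1) of a Lie algebra `L`. -/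
structure IsGrading3 (k : Type*) [CommRing k] (L : Type*) [LieRing L] [LieAlgebra k L]
    (Lm Lz Lp : Submodule k L) : Prop where
  decomp : ∀ x : L, ∃ a ∈ Lm, ∃ b ∈ Lz, ∃ c ∈ Lp, x = a + b + c
  indep : ∀ a ∈ Lm, ∀ b ∈ Lz, ∀ c ∈ Lp, a + b + c = 0 → a = 0 ∧ b = 0 ∧ c = 0
  mm : ∀ x ∈ Lm, ∀ y ∈ Lm, ⁅x, y⁆ = 0
  pp : ∀ x ∈ Lp, ∀ y ∈ Lp, ⁅x, y⁆ = 0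
  mz : ∀ x ∈ Lm, ∀ y ∈ Lz, ⁅x, y⁆ ∈ Lm
  pz : ∀ x ∈ Lp, ∀ y ∈ Lz, ⁅x, y⁆ ∈ Lp
  zz : ∀ x ∈ Lz, ∀ y ∈ Lz, ⁅x, y⁆ ∈ Lz
  mp : ∀ x ∈ Lm, ∀ y ∈ Lp, ⁅x, y⁆ ∈ Lz

/-! The value of γ̂ on each of P₋, ⟨P₋,P₊⟩ and P₊ is forced, because ⟨a, b⟩ = [a, b] in
ûTKK(P) and these three pieces span it additively; this gives uniqueness and the formula.
For existence, a ⊗ b ↦ [γ₋ a, γ₊ b] kills the defining relations of ⟨P₋,P₊⟩, since γ is a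
Jordan pair homomorphism and ad [x, y] is a derivation of L. The resulting map respects brackets
with elements of P₋ or P₊ by the bracket rules on generators, and the Leibniz rule carries this
over to brackets with ⟨a, b⟩ = [a, b]. -/

theorem lie_lie_lie_sub_lie_lie_lie {L : Type*} [LieRing L] (x y z w : L) :
    ⁅⁅⁅x, y⁆, z⁆, w⁆ - ⁅z, ⁅⁅y, x⁆, w⁆⁆ = ⁅⁅x, y⁆, ⁅z, w⁆⁆ := by
  rw [← lie_skew y x, neg_lie, lie_neg, sub_neg_eq_add, leibniz_lie, ← lie_skew ⁅x, y⁆ z, neg_lie]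
  abel

namespace IsLieBracket

variable {k V : Type*} [CommRing k] [AddCommGroup V] [Module k V] {B : V → V → V}

theorem swap (hB : IsLieBracket (k := k) B) (x y : V) : B x y = -B y x := by
  obtain ⟨hadd_left, hadd_right, -, -, halt, -⟩ := hB
  have h := halt (x + y)
  rw [hadd_left, hadd_right, hadd_right, halt, halt, zero_add, add_zero] at h
  exact eq_neg_of_add_eq_zero_left h

theorem map_bracket_of_map_bracket {L : Type*} [LieRing L] [Module k L]
    (hB : IsLieBracket (k := k) B) (f : V →ₗ[k] L) {x y : V}
    (hx : ∀ q, f (B x q) = ⁅f x, f q⁆) (hy : ∀ q, f (B y q) = ⁅f y, f q⁆) (q : V) :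
    f (B (B x y) q) = ⁅f (B x y), f q⁆ := by
  rw [eq_sub_of_add_eq (hB.2.2.2.2.2 x y q).symm, map_sub, hx, hy, hy, hx, hx y, leibniz_lie,
    add_sub_cancel_right]

end IsLieBracket

theorem prod_quotient_tensor_induction {R M N : Type*} [CommRing R] [AddCommGroup M] [Module R M]
    [AddCommGroup N] [Module R N] {A : Submodule R (M ⊗[R] N)}
    {P : M × ((M ⊗[R] N) ⧸ A) × N → Prop} (x : M × ((M ⊗[R] N) ⧸ A) × N)
    (left : ∀ a, P (a, 0, 0))
    (middle : ∀ a b, P (0, Submodule.Quotient.mk (a ⊗ₜ b), 0))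
    (right : ∀ b, P (0, 0, b))
    (add : ∀ x y, P x → P y → P (x + y)) : P x := by
  obtain ⟨a, X, b⟩ := x
  have hX : P (0, X, 0) := by
    induction X using Submodule.Quotient.induction_on with | H t => 
    induction t using TensorProduct.induction_on with
    | zero => simpa using left 0
    | tmul c d => exact middle c d
    | add s t hs ht => simpa using add _ _ hs ht
  simpa using add _ _ (add _ _ (left a) hX) (right b)

section TKK

variable {k Pm Pp L : Type*} [CommRing k] [AddCommGroup Pm] [AddCommGroup Pp] [Module k Pm]
  [Module k Pp] [LieRing L] [LieAlgebra k L] (γm : Pm →ₗ[k] L) (γp : Pp →ₗ[k] L)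

def lieTensorMap : Pm ⊗[k] Pp →ₗ[k] L :=
  (LieModule.toModuleHom k L L : L ⊗[k] L →ₗ[k] L) ∘ₗ TensorProduct.map γm γp

@[simp]
theorem lieTensorMap_tmul (a : Pm) (b : Pp) : lieTensorMap γm γp (a ⊗ₜ b) = ⁅γm a, γp b⁆ := by
  simp [lieTensorMap]

theorem span_le_ker_lieTensorMap (tm : Pm →ₗ[k] Pp →ₗ[k] Pm →ₗ[k] Pm)
    (tp : Pp →ₗ[k] Pm →ₗ[k] Pp →ₗ[k] Pp)
    (hhomm : ∀ a b c, γm (tm a b c) = ⁅⁅γm a, γp b⁆, γm c⁆)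
    (hhomp : ∀ b a d, γp (tp b a d) = ⁅⁅γp b, γm a⁆, γp d⁆) :
    Submodule.span k {x | ∃ a c : Pm, ∃ b d : Pp,
      x = (tm a b c ⊗ₜ[k] d - c ⊗ₜ[k] tp b a d) + (tm c d a ⊗ₜ[k] b - a ⊗ₜ[k] tp d c b)}
      ≤ LinearMap.ker (lieTensorMap γm γp) := by
  rw [Submodule.span_le]
  rintro x ⟨a, c, b, d, rfl⟩
  simp only [SetLike.mem_coe, LinearMap.mem_ker, map_add, map_sub, lieTensorMap_tmul, hhomm,
    hhomp, lie_lie_lie_sub_lie_lie_lie]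
  rw [← lie_skew, neg_add_cancel]

variable {γm γp} {A : Submodule k (Pm ⊗[k] Pp)}

def tkkLift (hA : A ≤ LinearMap.ker (lieTensorMap γm γp)) :
    Pm × ((Pm ⊗[k] Pp) ⧸ A) × Pp →ₗ[k] L :=
  γm.coprod ((A.liftQ (lieTensorMap γm γp) hA).coprod γp)

variable (hA : A ≤ LinearMap.ker (lieTensorMap γm γp))

@[simp]
theorem tkkLift_left (a : Pm) : tkkLift hA (a, 0, 0) = γm a := by
  simp [tkkLift]

@[simp]
theorem tkkLift_middle (a : Pm) (b : Pp) :
    tkkLift hA (0, Submodule.Quotient.mk (a ⊗ₜ b), 0) = ⁅γm a, γp b⁆ := by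
  simp [tkkLift]

@[simp]
theorem tkkLift_right (b : Pp) : tkkLift hA (0, 0, b) = γp b := by
  simp [tkkLift]

theorem tkkLift_middle_mem {Lm Lz Lp : Submodule k L} (hmp : ∀ x ∈ Lm, ∀ y ∈ Lp, ⁅x, y⁆ ∈ Lz)
    (hγm : ∀ a, γm a ∈ Lm) (hγp : ∀ b, γp b ∈ Lp) (X : (Pm ⊗[k] Pp) ⧸ A) :
    tkkLift hA (0, X, 0) ∈ Lz := by
  induction X using Submodule.Quotient.induction_on with | H t =>
  induction t using TensorProduct.induction_on with
  | zero => simp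
  | tmul a b => simpa using hmp _ (hγm a) _ (hγp b)
  | add s t hs ht => simpa [tkkLift] using Lz.add_mem hs ht

structure IsTKKBracket (tm : Pm →ₗ[k] Pp →ₗ[k] Pm →ₗ[k] Pm) (tp : Pp →ₗ[k] Pm →ₗ[k] Pp →ₗ[k] Pp)
    (B : Pm × ((Pm ⊗[k] Pp) ⧸ A) × Pp → Pm × ((Pm ⊗[k] Pp) ⧸ A) × Pp →
      Pm × ((Pm ⊗[k] Pp) ⧸ A) × Pp) : Prop where
  isLieBracket : IsLieBracket (k := k) B
  left_left : ∀ a c : Pm, B (a, 0, 0) (c, 0, 0) = 0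
  right_right : ∀ b d : Pp, B (0, 0, b) (0, 0, d) = 0
  left_right : ∀ (a : Pm) (b : Pp), B (a, 0, 0) (0, 0, b) = (0, Submodule.Quotient.mk (a ⊗ₜ b), 0)
  middle_left : ∀ (a c : Pm) (b : Pp),
    B (0, Submodule.Quotient.mk (a ⊗ₜ b), 0) (c, 0, 0) = (tm a b c, 0, 0)
  middle_right : ∀ (a : Pm) (b d : Pp),
    B (0, Submodule.Quotient.mk (a ⊗ₜ b), 0) (0, 0, d) = (0, 0, -(tp b a d))

theorem map_middle_of_map_bracket
    {B : Pm × ((Pm ⊗[k] Pp) ⧸ A) × Pp → Pm × ((Pm ⊗[k] Pp) ⧸ A) × Pp →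
      Pm × ((Pm ⊗[k] Pp) ⧸ A) × Pp}
    (hBmp : ∀ (a : Pm) (b : Pp), B (a, 0, 0) (0, 0, b) = (0, Submodule.Quotient.mk (a ⊗ₜ b), 0))
    {f : Pm × ((Pm ⊗[k] Pp) ⧸ A) × Pp →ₗ[k] L} (hf : ∀ p q, f (B p q) = ⁅f p, f q⁆)
    (hfm : ∀ a, f (a, 0, 0) = γm a) (hfp : ∀ b, f (0, 0, b) = γp b) (a : Pm) (b : Pp) :
    f (0, Submodule.Quotient.mk (a ⊗ₜ b), 0) = ⁅γm a, γp b⁆ := by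
  rw [← hBmp, hf, hfm, hfp]

theorem eq_tkkLift_of_map_bracket
    {B : Pm × ((Pm ⊗[k] Pp) ⧸ A) × Pp → Pm × ((Pm ⊗[k] Pp) ⧸ A) × Pp →
      Pm × ((Pm ⊗[k] Pp) ⧸ A) × Pp}
    (hBmp : ∀ (a : Pm) (b : Pp), B (a, 0, 0) (0, 0, b) = (0, Submodule.Quotient.mk (a ⊗ₜ b), 0))
    {f : Pm × ((Pm ⊗[k] Pp) ⧸ A) × Pp →ₗ[k] L} (hf : ∀ p q, f (B p q) = ⁅f p, f q⁆)
    (hfm : ∀ a, f (a, 0, 0) = γm a) (hfp : ∀ b, f (0, 0, b) = γp b) :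
    f = tkkLift hA := by
  refine LinearMap.ext fun x => ?_
  induction x using prod_quotient_tensor_induction with
  | left a => rw [hfm, tkkLift_left]
  | middle a b => rw [map_middle_of_map_bracket hBmp hf hfm hfp, tkkLift_middle]
  | right b => rw [hfp, tkkLift_right]
  | add x y hx hy => rw [map_add, map_add, hx, hy]

variable {tm : Pm →ₗ[k] Pp →ₗ[k] Pm →ₗ[k] Pm} {tp : Pp →ₗ[k] Pm →ₗ[k] Pp →ₗ[k] Pp}
  {B : Pm × ((Pm ⊗[k] Pp) ⧸ A) × Pp → Pm × ((Pm ⊗[k] Pp) ⧸ A) × Pp → Pm × ((Pm ⊗[k] Pp) ⧸ A) × Pp}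

theorem tkkLift_bracket_left (hB : IsTKKBracket tm tp B)
    (hhomm : ∀ a b c, γm (tm a b c) = ⁅⁅γm a, γp b⁆, γm c⁆) (hmm : ∀ a c, ⁅γm a, γm c⁆ = 0)
    (a : Pm) (q : Pm × ((Pm ⊗[k] Pp) ⧸ A) × Pp) :
    tkkLift hA (B (a, 0, 0) q) = ⁅tkkLift hA (a, 0, 0), tkkLift hA q⁆ := by
  induction q using prod_quotient_tensor_induction with
  | left c => rw [hB.left_left, map_zero, tkkLift_left, tkkLift_left, hmm]
  | middle c d =>
    rw [hB.isLieBracket.swap, hB.middle_left, map_neg, tkkLift_left, tkkLift_left, tkkLift_middle,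
      hhomm, lie_skew]
  | right b => rw [hB.left_right, tkkLift_middle, tkkLift_left, tkkLift_right]
  | add x y hx hy => rw [hB.isLieBracket.2.1, map_add, hx, hy, map_add, lie_add]

theorem tkkLift_bracket_right (hB : IsTKKBracket tm tp B)
    (hhomp : ∀ b a d, γp (tp b a d) = ⁅⁅γp b, γm a⁆, γp d⁆) (hpp : ∀ b d, ⁅γp b, γp d⁆ = 0)
    (b : Pp) (q : Pm × ((Pm ⊗[k] Pp) ⧸ A) × Pp) :
    tkkLift hA (B (0, 0, b) q) = ⁅tkkLift hA (0, 0, b), tkkLift hA q⁆ := by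
  induction q using prod_quotient_tensor_induction with
  | left a =>
    rw [hB.isLieBracket.swap, hB.left_right, map_neg, tkkLift_middle, tkkLift_right, tkkLift_left,
      lie_skew]
  | middle c d =>
    rw [hB.isLieBracket.swap, hB.middle_right, map_neg, tkkLift_right, tkkLift_right,
      tkkLift_middle, map_neg, neg_neg, hhomp, ← lie_skew (γp b), ← lie_skew (γp d), neg_lie]
  | right d => rw [hB.right_right, map_zero, tkkLift_right, tkkLift_right, hpp]
  | add x y hx hy => rw [hB.isLieBracket.2.1, map_add, hx, hy, map_add, lie_add]

theorem tkkLift_bracket (hB : IsTKKBracket tm tp B)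
    (hhomm : ∀ a b c, γm (tm a b c) = ⁅⁅γm a, γp b⁆, γm c⁆)
    (hhomp : ∀ b a d, γp (tp b a d) = ⁅⁅γp b, γm a⁆, γp d⁆)
    (hmm : ∀ a c, ⁅γm a, γm c⁆ = 0) (hpp : ∀ b d, ⁅γp b, γp d⁆ = 0)
    (p q : Pm × ((Pm ⊗[k] Pp) ⧸ A) × Pp) :
    tkkLift hA (B p q) = ⁅tkkLift hA p, tkkLift hA q⁆ := by
  induction p using prod_quotient_tensor_induction generalizing q with
  | left a => exact tkkLift_bracket_left hA hB hhomm hmm a q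
  | middle a b =>
    rw [← hB.left_right]
    exact hB.isLieBracket.map_bracket_of_map_bracket _ (tkkLift_bracket_left hA hB hhomm hmm a)
      (tkkLift_bracket_right hA hB hhomp hpp b) q
  | right b => exact tkkLift_bracket_right hA hB hhomp hpp b q
  | add x y hx hy => rw [hB.isLieBracket.1, map_add, hx, hy, map_add, add_lie]

end TKK

theorem stmt14_general {k : Type*} [CommRing k]
    {Pm Pp : Type*} [AddCommGroup Pm] [AddCommGroup Pp] [Module k Pm] [Module k Pp]
    (tm : Pm →ₗ[k] Pp →ₗ[k] Pm →ₗ[k] Pm)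
    (tp : Pp →ₗ[k] Pm →ₗ[k] Pp →ₗ[k] Pp)
    (A : Submodule k (Pm ⊗[k] Pp))
    (hA : A = Submodule.span k {x | ∃ a c : Pm, ∃ b d : Pp,
      x = (tm a b c ⊗ₜ[k] d - c ⊗ₜ[k] tp b a d)
        + (tm c d a ⊗ₜ[k] b - a ⊗ₜ[k] tp d c b)})
    -- the Lie bracket of ûTKK(P) = P₋ × ⟨P₋,P₊⟩ × P₊, specified on generators
    (B : (Pm × ((Pm ⊗[k] Pp) ⧸ A) × Pp) → (Pm × ((Pm ⊗[k] Pp) ⧸ A) × Pp) →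
         (Pm × ((Pm ⊗[k] Pp) ⧸ A) × Pp))
    (hB : IsLieBracket (k := k) B)
    (hBmm : ∀ a c : Pm, B (a, 0, 0) (c, 0, 0) = 0)
    (hBpp : ∀ b d : Pp, B (0, 0, b) (0, 0, d) = 0)
    (hBmp : ∀ (a : Pm) (b : Pp), B (a, 0, 0) (0, 0, b)
      = (0, Submodule.Quotient.mk (a ⊗ₜ[k] b), 0))
    (hBzm : ∀ (a c : Pm) (b : Pp),
      B (0, Submodule.Quotient.mk (a ⊗ₜ[k] b), 0) (c, 0, 0) = (tm a b c, 0, 0))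
    (hBzp : ∀ (a : Pm) (b d : Pp),
      B (0, Submodule.Quotient.mk (a ⊗ₜ[k] b), 0) (0, 0, d) = (0, 0, -(tp b a d)))
    -- the 3-graded Lie algebra L
    {L : Type*} [LieRing L] [LieAlgebra k L]
    (Lm Lz Lp : Submodule k L) (hgr : IsGrading3 k L Lm Lz Lp)
    -- the Jordan pair homomorphism γ = (γ₋, γ₊) : P → (L₋₁, L₁)
    (γm : Pm →ₗ[k] L) (γp : Pp →ₗ[k] L)
    (hγm : ∀ a, γm a ∈ Lm) (hγp : ∀ b, γp b ∈ Lp)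
    (hhomm : ∀ a b c, γm (tm a b c) = ⁅⁅γm a, γp b⁆, γm c⁆)
    (hhomp : ∀ b a d, γp (tp b a d) = ⁅⁅γp b, γm a⁆, γp d⁆) :
    -- there is a unique graded Lie algebra homomorphism extending γ ...
    (∃! γh : (Pm × ((Pm ⊗[k] Pp) ⧸ A) × Pp) →ₗ[k] L,
      (∀ p q, γh (B p q) = ⁅γh p, γh q⁆) ∧
      (∀ X : (Pm ⊗[k] Pp) ⧸ A, γh (0, X, 0) ∈ Lz) ∧
      (∀ a : Pm, γh (a, 0, 0) = γm a) ∧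
      (∀ b : Pp, γh (0, 0, b) = γp b)) ∧
    -- ... and it is given by the formula of the theorem
    (∀ γh : (Pm × ((Pm ⊗[k] Pp) ⧸ A) × Pp) →ₗ[k] L,
      ((∀ p q, γh (B p q) = ⁅γh p, γh q⁆) ∧
       (∀ X : (Pm ⊗[k] Pp) ⧸ A, γh (0, X, 0) ∈ Lz) ∧
       (∀ a : Pm, γh (a, 0, 0) = γm a) ∧
       (∀ b : Pp, γh (0, 0, b) = γp b)) →
      ∀ (c : Pm) (d : Pp),
        γh (0, Submodule.Quotient.mk (c ⊗ₜ[k] d), 0) = ⁅γm c, γp d⁆) := by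
  have hker : A ≤ LinearMap.ker (lieTensorMap γm γp) :=
    hA ▸ span_le_ker_lieTensorMap γm γp tm tp hhomm hhomp
  have hTKK : IsTKKBracket tm tp B := ⟨hB, hBmm, hBpp, hBmp, hBzm, hBzp⟩
  have hmm : ∀ a c, ⁅γm a, γm c⁆ = 0 := fun a c => hgr.mm _ (hγm a) _ (hγm c)
  have hpp : ∀ b d, ⁅γp b, γp d⁆ = 0 := fun b d => hgr.pp _ (hγp b) _ (hγp d)
  refine ⟨⟨tkkLift hker, ⟨tkkLift_bracket hker hTKK hhomm hhomp hmm hpp,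
    tkkLift_middle_mem hker hgr.mp hγm hγp, tkkLift_left hker, tkkLift_right hker⟩, ?_⟩, ?_⟩
  · rintro f ⟨hf, -, hfm, hfp⟩
    exact eq_tkkLift_of_map_bracket hker hBmp hf hfm hfp
  · rintro f ⟨hf, -, hfm, hfp⟩
    exact map_middle_of_map_bracket hBmp hf hfm hfp

/-- For a Jordan pair `P`, a 3-graded Lie algebra `L`, and a
Jordan pair homomorphism `γ = (γ₋, γ₊) : P → (L₋₁, L₁)`, there is a unique
graded Lie algebra homomorphism `γ̂ : ûTKK(P) → L` extending `γ`; it is given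
by `γ̂(a + Σ⟨cᵢ,dᵢ⟩ + b) = γ₋(a) + Σ[γ₋(cᵢ), γ₊(dᵢ)] + γ₊(b)`. -/
theorem stmt14 {k : Type*} [CommRing k]
    {Pm Pp : Type*} [AddCommGroup Pm] [AddCommGroup Pp] [Module k Pm] [Module k Pp]
    (tm : Pm →ₗ[k] Pp →ₗ[k] Pm →ₗ[k] Pm)
    (tp : Pp →ₗ[k] Pm →ₗ[k] Pp →ₗ[k] Pp)
    (symm_m : ∀ a b c, tm a b c = tm c b a)
    (symm_p : ∀ b a d, tp b a d = tp d a b)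
    (jid_m : ∀ a b c d x, tm a b (tm c d x) - tm c d (tm a b x)
      = tm (tm a b c) d x - tm c (tp b a d) x)
    (jid_p : ∀ b a d c y, tp b a (tp d c y) - tp d c (tp b a y)
      = tp (tp b a d) c y - tp d (tm a b c) y)
    (A : Submodule k (Pm ⊗[k] Pp))
    (hA : A = Submodule.span k {x | ∃ a c : Pm, ∃ b d : Pp,
      x = (tm a b c ⊗ₜ[k] d - c ⊗ₜ[k] tp b a d)
        + (tm c d a ⊗ₜ[k] b - a ⊗ₜ[k] tp d c b)})
    -- the Lie bracket of ûTKK(P) = P₋ × ⟨P₋,P₊⟩ × P₊, specified on generators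
    (B : (Pm × ((Pm ⊗[k] Pp) ⧸ A) × Pp) → (Pm × ((Pm ⊗[k] Pp) ⧸ A) × Pp) →
         (Pm × ((Pm ⊗[k] Pp) ⧸ A) × Pp))
    (hB : IsLieBracket (k := k) B)
    (hBmm : ∀ a c : Pm, B (a, 0, 0) (c, 0, 0) = 0)
    (hBpp : ∀ b d : Pp, B (0, 0, b) (0, 0, d) = 0)
    (hBmp : ∀ (a : Pm) (b : Pp), B (a, 0, 0) (0, 0, b)
      = (0, Submodule.Quotient.mk (a ⊗ₜ[k] b), 0))
    (hBzm : ∀ (a c : Pm) (b : Pp),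
      B (0, Submodule.Quotient.mk (a ⊗ₜ[k] b), 0) (c, 0, 0) = (tm a b c, 0, 0))
    (hBzp : ∀ (a : Pm) (b d : Pp),
      B (0, Submodule.Quotient.mk (a ⊗ₜ[k] b), 0) (0, 0, d) = (0, 0, -(tp b a d)))
    (hBzz : ∀ (a c : Pm) (b d : Pp),
      B (0, Submodule.Quotient.mk (a ⊗ₜ[k] b), 0)
        (0, Submodule.Quotient.mk (c ⊗ₜ[k] d), 0)
      = (0, Submodule.Quotient.mk (tm a b c ⊗ₜ[k] d)
            - Submodule.Quotient.mk (c ⊗ₜ[k] tp b a d), 0))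
    -- the 3-graded Lie algebra L
    {L : Type*} [LieRing L] [LieAlgebra k L]
    (Lm Lz Lp : Submodule k L) (hgr : IsGrading3 k L Lm Lz Lp)
    -- the Jordan pair homomorphism γ = (γ₋, γ₊) : P → (L₋₁, L₁)
    (γm : Pm →ₗ[k] L) (γp : Pp →ₗ[k] L)
    (hγm : ∀ a, γm a ∈ Lm) (hγp : ∀ b, γp b ∈ Lp)
    (hhomm : ∀ a b c, γm (tm a b c) = ⁅⁅γm a, γp b⁆, γm c⁆)
    (hhomp : ∀ b a d, γp (tp b a d) = ⁅⁅γp b, γm a⁆, γp d⁆) :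
    -- there is a unique graded Lie algebra homomorphism extending γ ...
    (∃! γh : (Pm × ((Pm ⊗[k] Pp) ⧸ A) × Pp) →ₗ[k] L,
      (∀ p q, γh (B p q) = ⁅γh p, γh q⁆) ∧
      (∀ X : (Pm ⊗[k] Pp) ⧸ A, γh (0, X, 0) ∈ Lz) ∧
      (∀ a : Pm, γh (a, 0, 0) = γm a) ∧
      (∀ b : Pp, γh (0, 0, b) = γp b)) ∧
    -- ... and it is given by the formula of the theorem
    (∀ γh : (Pm × ((Pm ⊗[k] Pp) ⧸ A) × Pp) →ₗ[k] L,
      ((∀ p q, γh (B p q) = ⁅γh p, γh q⁆) ∧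
       (∀ X : (Pm ⊗[k] Pp) ⧸ A, γh (0, X, 0) ∈ Lz) ∧
       (∀ a : Pm, γh (a, 0, 0) = γm a) ∧
       (∀ b : Pp, γh (0, 0, b) = γp b)) →
      ∀ (c : Pm) (d : Pp),
        γh (0, Submodule.Quotient.mk (c ⊗ₜ[k] d), 0) = ⁅γm c, γp d⁆) :=
  stmt14_general tm tp A hA B hB hBmm hBpp hBmp hBzm hBzp Lm Lz Lp hgr γm γp hγm hγp hhomm hhomp
end

section
/- Let L = L₋₁⊕L₀⊕L₁ be a 0-perfect 3-graded Lie algebra over a field of characteristic ≠ 2,3, and suppose H²_gr(L,M) = 0 for every L-module M concentrated in degree 0 (which is automatically a trivial module since LM = ([L₁,L₁]+L₁)M-type arguments force the action to vanish). Then every central 0-extension φ : K → L splits: there exists a graded Lie algebra homomorphism ψ : L → K with φ∘ψ = id_L. -/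
/-- `x` has degree `i ∈ {-1, 0, 1}` with respect to the grading. -/
def HasDeg {k : Type*} [CommRing k] {L : Type*} [LieRing L] [LieAlgebra k L]
    (Lm Lz Lp : Submodule k L) (i : ℤ) (x : L) : Prop :=
  (i = -1 ∧ x ∈ Lm) ∨ (i = 0 ∧ x ∈ Lz) ∨ (i = 1 ∧ x ∈ Lp)

theorem HasDeg.map {k : Type*} [CommRing k] {L K : Type*} [LieRing L] [LieAlgebra k L]
    [LieRing K] [LieAlgebra k K] {Lm Lz Lp : Submodule k L} {Km Kz Kp : Submodule k K}
    {f : L →ₗ[k] K} (hm : ∀ x ∈ Lm, f x ∈ Km) (hz : ∀ x ∈ Lz, f x ∈ Kz)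
    (hp : ∀ x ∈ Lp, f x ∈ Kp) {i : ℤ} {x : L} (hx : HasDeg Lm Lz Lp i x) :
    HasDeg Km Kz Kp i (f x) := by
  rcases hx with ⟨rfl, hx⟩ | ⟨rfl, hx⟩ | ⟨rfl, hx⟩
  exacts [Or.inl ⟨rfl, hm x hx⟩, Or.inr (Or.inl ⟨rfl, hz x hx⟩), Or.inr (Or.inr ⟨rfl, hp x hx⟩)]

theorem Submodule.exists_section_of_map_eq {k V W : Type*} [Field k] [AddCommGroup V]
    [Module k V] [AddCommGroup W] [Module k W] (f : V →ₗ[k] W) {A : Submodule k V}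
    {B : Submodule k W} (h : A.map f = B) : ∃ g : B →ₗ[k] V, ∀ b, g b ∈ A ∧ f (g b) = b := by
  subst h
  obtain ⟨g, hg⟩ := (f.submoduleMap A).exists_rightInverse_of_surjective
    (LinearMap.range_eq_top.2 (f.submoduleMap_surjective A))
  exact ⟨A.subtype ∘ₗ g, fun b => ⟨(g b).2, congrArg Subtype.val (LinearMap.congr_fun hg b)⟩⟩

namespace IsGrading3

section Graded

variable {k : Type*} [CommRing k] {L : Type*} [LieRing L] [LieAlgebra k L]
  {Lm Lz Lp : Submodule k L}

theorem add_add_injective (hgr : IsGrading3 k L Lm Lz Lp) {a a' b b' c c' : L}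
    (ha : a ∈ Lm) (ha' : a' ∈ Lm) (hb : b ∈ Lz) (hb' : b' ∈ Lz) (hc : c ∈ Lp) (hc' : c' ∈ Lp)
    (h : a + b + c = a' + b' + c') : a = a' ∧ b = b' ∧ c = c' := by
  have h0 : (a - a') + (b - b') + (c - c') = 0 := by rw [← sub_eq_zero] at h; rw [← h]; abel
  simpa only [sub_eq_zero] using
    hgr.indep _ (sub_mem ha ha') _ (sub_mem hb hb') _ (sub_mem hc hc') h0

theorem eq_zero_of_mem_m_of_mem_z (hgr : IsGrading3 k L Lm Lz Lp) {w : L} (hm : w ∈ Lm)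
    (hz : w ∈ Lz) : w = 0 :=
  (hgr.add_add_injective hm (zero_mem _) (zero_mem _) hz (zero_mem _) (zero_mem _)
    (by simp)).1

theorem eq_zero_of_mem_p_of_mem_z (hgr : IsGrading3 k L Lm Lz Lp) {w : L} (hp : w ∈ Lp)
    (hz : w ∈ Lz) : w = 0 :=
  (hgr.add_add_injective (zero_mem _) (zero_mem _) (zero_mem _) hz hp (zero_mem _)
    (by simp)).2.2

theorem lie_mem_m_of_hasDeg (hgr : IsGrading3 k L Lm Lz Lp) {i j : ℤ} {x y : L}
    (hx : HasDeg Lm Lz Lp i x) (hy : HasDeg Lm Lz Lp j y) (hij : i + j < 0) : ⁅x, y⁆ ∈ Lm := by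
  rcases hx with ⟨rfl, hx⟩ | ⟨rfl, hx⟩ | ⟨rfl, hx⟩ <;>
    rcases hy with ⟨rfl, hy⟩ | ⟨rfl, hy⟩ | ⟨rfl, hy⟩ <;> try omega
  · rw [hgr.mm x hx y hy]; exact zero_mem _
  · exact hgr.mz x hx y hy
  · rw [← lie_skew]; exact neg_mem (hgr.mz y hy x hx)

theorem lie_mem_p_of_hasDeg (hgr : IsGrading3 k L Lm Lz Lp) {i j : ℤ} {x y : L}
    (hx : HasDeg Lm Lz Lp i x) (hy : HasDeg Lm Lz Lp j y) (hij : 0 < i + j) : ⁅x, y⁆ ∈ Lp := by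
  rcases hx with ⟨rfl, hx⟩ | ⟨rfl, hx⟩ | ⟨rfl, hx⟩ <;>
    rcases hy with ⟨rfl, hy⟩ | ⟨rfl, hy⟩ | ⟨rfl, hy⟩ <;> try omega
  · rw [← lie_skew]; exact neg_mem (hgr.pz y hy x hx)
  · exact hgr.pz x hx y hy
  · rw [hgr.pp x hx y hy]; exact zero_mem _

theorem exists_linearMap_extend (hgr : IsGrading3 k L Lm Lz Lp) {V : Type*} [AddCommGroup V]
    [Module k V] (fm : Lm →ₗ[k] V) (fz : Lz →ₗ[k] V) (fp : Lp →ₗ[k] V) :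
    ∃ f : L →ₗ[k] V, (∀ x (hx : x ∈ Lm), f x = fm ⟨x, hx⟩) ∧
      (∀ x (hx : x ∈ Lz), f x = fz ⟨x, hx⟩) ∧ ∀ x (hx : x ∈ Lp), f x = fp ⟨x, hx⟩ := by
  set e : (Lm × Lz) × Lp →ₗ[k] L := (Lm.subtype.coprod Lz.subtype).coprod Lp.subtype
  have he : ∀ p, e p = (p.1.1 : L) + p.1.2 + p.2 := fun p => by simp [e, add_assoc]
  have e_bij : Function.Bijective e := by
    refine ⟨?_, fun x => ?_⟩
    · rw [← LinearMap.ker_eq_bot, LinearMap.ker_eq_bot']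
      rintro ⟨⟨a, b⟩, c⟩ h
      rw [he] at h
      obtain ⟨ha, hb, hc⟩ := hgr.indep _ a.2 _ b.2 _ c.2 h
      simp only [Prod.mk_eq_zero, ← Subtype.coe_inj]
      exact ⟨⟨ha, hb⟩, hc⟩
    · obtain ⟨a, ha, b, hb, c, hc, rfl⟩ := hgr.decomp x
      exact ⟨((⟨a, ha⟩, ⟨b, hb⟩), ⟨c, hc⟩), he _⟩
  set E := LinearEquiv.ofBijective e e_bij
  have hE : ∀ p, E.symm (e p) = p := E.symm_apply_apply
  refine ⟨((fm.coprod fz).coprod fp) ∘ₗ E.symm, fun x hx => ?_, fun x hx => ?_,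
    fun x hx => ?_⟩
  · simpa [he] using congrArg ((fm.coprod fz).coprod fp) (hE ((⟨x, hx⟩, 0), 0))
  · simpa [he] using congrArg ((fm.coprod fz).coprod fp) (hE ((0, ⟨x, hx⟩), 0))
  · simpa [he] using congrArg ((fm.coprod fz).coprod fp) (hE ((0, 0), ⟨x, hx⟩))

variable {K : Type*} [LieRing K] [LieAlgebra k K] {Km Kz Kp : Submodule k K}

theorem map_eq_of_surjective (hL : IsGrading3 k L Lm Lz Lp) (hK : IsGrading3 k K Km Kz Kp)
    {φ : K →ₗ[k] L} (hm : ∀ x ∈ Km, φ x ∈ Lm) (hz : ∀ x ∈ Kz, φ x ∈ Lz)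
    (hp : ∀ x ∈ Kp, φ x ∈ Lp) (hφ : Function.Surjective φ) :
    Km.map φ = Lm ∧ Kz.map φ = Lz ∧ Kp.map φ = Lp := by
  have hpre : ∀ x, ∃ a ∈ Km, ∃ b ∈ Kz, ∃ c ∈ Kp, φ a + φ b + φ c = x := fun x => by
    obtain ⟨y, rfl⟩ := hφ x
    obtain ⟨a, ha, b, hb, c, hc, rfl⟩ := hK.decomp y
    exact ⟨a, ha, b, hb, c, hc, by simp only [map_add]⟩
  refine ⟨le_antisymm (Submodule.map_le_iff_le_comap.2 hm) fun x hx => ?_,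
    le_antisymm (Submodule.map_le_iff_le_comap.2 hz) fun x hx => ?_,
    le_antisymm (Submodule.map_le_iff_le_comap.2 hp) fun x hx => ?_⟩ <;>
  obtain ⟨a, ha, b, hb, c, hc, h⟩ := hpre x
  · exact ⟨a, ha, (hL.add_add_injective (hm a ha) hx (hz b hb) (zero_mem _) (hp c hc)
      (zero_mem _) (by rw [h, add_zero, add_zero])).1⟩
  · exact ⟨b, hb, (hL.add_add_injective (hm a ha) (zero_mem _) (hz b hb) hx (hp c hc)
      (zero_mem _) (by rw [h, zero_add, add_zero])).2.1⟩
  · exact ⟨c, hc, (hL.add_add_injective (hm a ha) (zero_mem _) (hz b hb) (zero_mem _) (hp c hc)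
      hx (by rw [h, zero_add, zero_add])).2.2⟩

end Graded

theorem exists_graded_section {k : Type*} [Field k] {L K : Type*} [LieRing L] [LieAlgebra k L]
    [LieRing K] [LieAlgebra k K] {Lm Lz Lp : Submodule k L} {Km Kz Kp : Submodule k K}
    (hL : IsGrading3 k L Lm Lz Lp) (hK : IsGrading3 k K Km Kz Kp)
    {φ : K →ₗ[k] L} (hm : ∀ x ∈ Km, φ x ∈ Lm) (hz : ∀ x ∈ Kz, φ x ∈ Lz)
    (hp : ∀ x ∈ Kp, φ x ∈ Lp) (hφ : Function.Surjective φ) :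
    ∃ s : L →ₗ[k] K, (∀ x ∈ Lm, s x ∈ Km) ∧ (∀ x ∈ Lz, s x ∈ Kz) ∧ (∀ x ∈ Lp, s x ∈ Kp) ∧
      ∀ x, φ (s x) = x := by
  obtain ⟨hmapm, hmapz, hmapp⟩ := hL.map_eq_of_surjective hK hm hz hp hφ
  obtain ⟨gm, hgm⟩ := Submodule.exists_section_of_map_eq φ hmapm
  obtain ⟨gz, hgz⟩ := Submodule.exists_section_of_map_eq φ hmapz
  obtain ⟨gp, hgp⟩ := Submodule.exists_section_of_map_eq φ hmapp
  obtain ⟨s, hsm, hsz, hsp⟩ := hL.exists_linearMap_extend gm gz gp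
  refine ⟨s, fun x hx => ?_, fun x hx => ?_, fun x hx => ?_, fun x => ?_⟩
  · exact hsm x hx ▸ (hgm _).1
  · exact hsz x hx ▸ (hgz _).1
  · exact hsp x hx ▸ (hgp _).1
  · obtain ⟨a, ha, b, hb, c, hc, rfl⟩ := hL.decomp x
    simp only [map_add]
    rw [hsm a ha, hsz b hb, hsp c hc, (hgm _).2, (hgz _).2, (hgp _).2]

end IsGrading3

theorem lie_lie_sub_lie_lie_add_lie_lie {L : Type*} [LieRing L] (x y z : L) :
    ⁅⁅x, y⁆, z⁆ - ⁅⁅x, z⁆, y⁆ + ⁅⁅y, z⁆, x⁆ = 0 := by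
  rw [lie_lie, ← lie_skew ⁅x, z⁆ y, ← lie_skew ⁅y, z⁆ x]
  abel

namespace LieHom

variable {k : Type*} [CommRing k] {K L : Type*} [LieRing K] [LieAlgebra k K] [LieRing L]
  [LieAlgebra k L] (φ : K →ₗ⁅k⁆ L) {s : L →ₗ[k] K}

def sectionDefect (hs : ∀ x, φ (s x) = x) : L →ₗ[k] L →ₗ[k] LinearMap.ker (φ : K →ₗ[k] L) :=
  LinearMap.mk₂ k (fun x y => ⟨s ⁅x, y⁆ - ⁅s x, s y⁆, by simp [hs]⟩)
    (fun x x' y => by ext; simp only [add_lie, map_add, Submodule.coe_add]; abel)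
    (fun c x y => by ext; simp [smul_sub])
    (fun x y y' => by ext; simp only [lie_add, map_add, Submodule.coe_add]; abel)
    (fun c x y => by ext; simp [smul_sub])

@[simp]
theorem coe_sectionDefect (hs : ∀ x, φ (s x) = x) (x y : L) :
    (φ.sectionDefect hs x y : K) = s ⁅x, y⁆ - ⁅s x, s y⁆ := rfl

theorem sectionDefect_self (hs : ∀ x, φ (s x) = x) (x : L) : φ.sectionDefect hs x x = 0 := by
  ext; simp

variable {φ}

theorem lie_apply_lie_of_central (hs : ∀ x, φ (s x) = x)
    (hcent : ∀ w, φ w = 0 → ∀ v : K, ⁅w, v⁆ = 0) (x y : L) (w : K) :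
    ⁅s ⁅x, y⁆, w⁆ = ⁅⁅s x, s y⁆, w⁆ := by
  rw [← sub_eq_zero, ← sub_lie]
  exact hcent _ (φ.sectionDefect hs x y).2 w

theorem sectionDefect_cocycle (hs : ∀ x, φ (s x) = x)
    (hcent : ∀ w, φ w = 0 → ∀ v : K, ⁅w, v⁆ = 0) (x y z : L) :
    φ.sectionDefect hs ⁅x, y⁆ z - φ.sectionDefect hs ⁅x, z⁆ y + φ.sectionDefect hs ⁅y, z⁆ x
      = 0 := by
  ext
  simp only [Submodule.coe_add, Submodule.coe_sub, coe_sectionDefect,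
    lie_apply_lie_of_central hs hcent, ZeroMemClass.coe_zero]
  have hL := congrArg s (lie_lie_sub_lie_lie_add_lie_lie x y z)
  have hK := lie_lie_sub_lie_lie_add_lie_lie (s x) (s y) (s z)
  simp only [map_add, map_sub, map_zero] at hL
  convert congrArg₂ (· - ·) hL hK using 1 <;> abel

def splittingOfCoboundary (hs : ∀ x, φ (s x) = x) (hcent : ∀ w, φ w = 0 → ∀ v : K, ⁅w, v⁆ = 0)
    (τ : L →ₗ[k] LinearMap.ker (φ : K →ₗ[k] L)) (hτ : ∀ x y, φ.sectionDefect hs x y = τ ⁅x, y⁆) :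
    L →ₗ⁅k⁆ K where
  toLinearMap := s - (LinearMap.ker (φ : K →ₗ[k] L)).subtype ∘ₗ τ
  map_lie' {x y} := by
    have hτxy : (τ ⁅x, y⁆ : K) = s ⁅x, y⁆ - ⁅s x, s y⁆ := by rw [← hτ, coe_sectionDefect]
    have h₁ : ⁅(τ x : K), s y - τ y⁆ = 0 := hcent _ (τ x).2 _
    have h₂ : ⁅s x, (τ y : K)⁆ = 0 := by rw [← lie_skew, hcent _ (τ y).2, neg_zero]
    show s ⁅x, y⁆ - τ ⁅x, y⁆ = ⁅s x - τ x, s y - τ y⁆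
    rw [hτxy, sub_lie, lie_sub, h₁, h₂]
    abel

theorem splittingOfCoboundary_apply (hs : ∀ x, φ (s x) = x)
    (hcent : ∀ w, φ w = 0 → ∀ v : K, ⁅w, v⁆ = 0)
    (τ : L →ₗ[k] LinearMap.ker (φ : K →ₗ[k] L)) (hτ : ∀ x y, φ.sectionDefect hs x y = τ ⁅x, y⁆)
    (x : L) : splittingOfCoboundary hs hcent τ hτ x = s x - τ x := rfl

end LieHom

theorem IsGrading3.sectionDefect_eq_zero_of_hasDeg {k : Type*} [CommRing k] {L K : Type*}
    [LieRing L] [LieAlgebra k L] [LieRing K] [LieAlgebra k K] {Lm Lz Lp : Submodule k L}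
    {Km Kz Kp : Submodule k K} (hL : IsGrading3 k L Lm Lz Lp) (hK : IsGrading3 k K Km Kz Kp)
    {φ : K →ₗ⁅k⁆ L} (hker : ∀ x, φ x = 0 → x ∈ Kz) {s : L →ₗ[k] K}
    (hsm : ∀ x ∈ Lm, s x ∈ Km) (hsz : ∀ x ∈ Lz, s x ∈ Kz) (hsp : ∀ x ∈ Lp, s x ∈ Kp)
    (hs : ∀ x, φ (s x) = x) {i j : ℤ} {x y : L} (hx : HasDeg Lm Lz Lp i x)
    (hy : HasDeg Lm Lz Lp j y) (hij : i + j ≠ 0) : φ.sectionDefect hs x y = 0 := by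
  have hKx := hx.map hsm hsz hsp
  have hKy := hy.map hsm hsz hsp
  have hz : (φ.sectionDefect hs x y : K) ∈ Kz := hker _ (φ.sectionDefect hs x y).2
  rw [LieHom.coe_sectionDefect] at hz
  rw [← Submodule.coe_eq_zero, LieHom.coe_sectionDefect]
  rcases hij.lt_or_gt with hij | hij
  · exact hK.eq_zero_of_mem_m_of_mem_z
      (sub_mem (hsm _ (hL.lie_mem_m_of_hasDeg hx hy hij)) (hK.lie_mem_m_of_hasDeg hKx hKy hij)) hz
  · exact hK.eq_zero_of_mem_p_of_mem_z
      (sub_mem (hsp _ (hL.lie_mem_p_of_hasDeg hx hy hij)) (hK.lie_mem_p_of_hasDeg hKx hKy hij)) hz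

theorem stmt19_general {k : Type u} [Field k]
    {L : Type u} [LieRing L] [LieAlgebra k L]
    (Lm Lz Lp : Submodule k L) (hgr : IsGrading3 k L Lm Lz Lp)
    -- H²_gr(L,M) = 0 for every module M with the trivial grading M = M₀
    (hH2 : ∀ (M : Type u) (_ : AddCommGroup M) (_ : Module k M)
      (σ : L →ₗ[k] L →ₗ[k] M),
      -- σ is alternating
      (∀ x : L, σ x x = 0) →
      -- σ is a 2-cocycle (with trivial coefficients)
      (∀ x y z : L, σ ⁅x, y⁆ z - σ ⁅x, z⁆ y + σ ⁅y, z⁆ x = 0) →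
      -- σ has degree 0: it vanishes on L_i ∧ L_j unless i + j = 0
      (∀ (i j : ℤ) (x y : L), HasDeg Lm Lz Lp i x → HasDeg Lm Lz Lp j y →
        i + j ≠ 0 → σ x y = 0) →
      -- σ is the coboundary of a degree-0 cochain τ (τ(L_{±1}) = 0)
      ∃ τ : L →ₗ[k] M, (∀ x ∈ Lm, τ x = 0) ∧ (∀ x ∈ Lp, τ x = 0) ∧
        ∀ x y : L, σ x y = τ ⁅x, y⁆) :
    -- every central 0-extension of L splits via a graded homomorphism
    ∀ (K : Type u) (_ : LieRing K) (_ : LieAlgebra k K)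
      (Km Kz Kp : Submodule k K) (_ : IsGrading3 k K Km Kz Kp)
      (φ : K →ₗ⁅k⁆ L),
      (∀ x ∈ Km, φ x ∈ Lm) → (∀ x ∈ Kz, φ x ∈ Lz) → (∀ x ∈ Kp, φ x ∈ Lp) →
      Function.Surjective φ →
      (∀ x : K, φ x = 0 → x ∈ Kz) →
      (∀ x : K, φ x = 0 → ∀ y : K, ⁅x, y⁆ = 0) →
      ∃ ψ : L →ₗ⁅k⁆ K,
        (∀ x ∈ Lm, ψ x ∈ Km) ∧ (∀ x ∈ Lz, ψ x ∈ Kz) ∧ (∀ x ∈ Lp, ψ x ∈ Kp) ∧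
        ∀ x, φ (ψ x) = x := by
  intro K _ _ Km Kz Kp hK φ hφm hφz hφp hφ hker hcent
  obtain ⟨s, hsm, hsz, hsp, hs⟩ :=
    IsGrading3.exists_graded_section hgr hK (φ := (φ : K →ₗ[k] L)) hφm hφz hφp hφ
  simp only [LieHom.coe_toLinearMap] at hs
  obtain ⟨τ, hτm, hτp, hτ⟩ := hH2 _ inferInstance inferInstance (φ.sectionDefect hs)
    (φ.sectionDefect_self hs) (LieHom.sectionDefect_cocycle hs hcent)
    fun _ _ _ _ hx hy hij =>
      hgr.sectionDefect_eq_zero_of_hasDeg hK hker hsm hsz hsp hs hx hy hij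
  refine ⟨LieHom.splittingOfCoboundary hs hcent τ hτ, fun x hx => ?_, fun x hx => ?_,
    fun x hx => ?_, fun x => ?_⟩ <;> rw [LieHom.splittingOfCoboundary_apply]
  · simpa [hτm x hx] using hsm x hx
  · exact sub_mem (hsz x hx) (hker _ (τ x).2)
  · simpa [hτp x hx] using hsp x hx
  · rw [map_sub, hs, show φ (τ x) = 0 from (τ x).2, sub_zero]

/-- Let `L` be a 0-perfect 3-graded Lie algebra over a field of
characteristic ≠ 2,3 with `H²_gr(L,M) = 0` for every coefficient module `M`
concentrated in degree 0 (on which the action of `L` is then necessarily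
trivial): every degree-0 2-cocycle with values in `M` is the coboundary of a
degree-0 linear map. Then every central 0-extension `φ : K → L` splits via a
graded Lie algebra homomorphism `ψ : L → K` with `φ ∘ ψ = id`. -/
theorem stmt19 {k : Type u} [Field k]
    (hchar2 : (2 : k) ≠ 0) (hchar3 : (3 : k) ≠ 0)
    {L : Type u} [LieRing L] [LieAlgebra k L]
    (Lm Lz Lp : Submodule k L) (hgr : IsGrading3 k L Lm Lz Lp)
    -- L is 0-perfect
    (hperf : Lz = Submodule.span k {x : L | ∃ a ∈ Lm, ∃ b ∈ Lp, x = ⁅a, b⁆})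
    -- H²_gr(L,M) = 0 for every module M with the trivial grading M = M₀
    (hH2 : ∀ (M : Type u) (_ : AddCommGroup M) (_ : Module k M)
      (σ : L →ₗ[k] L →ₗ[k] M),
      -- σ is alternating
      (∀ x : L, σ x x = 0) →
      -- σ is a 2-cocycle (with trivial coefficients)
      (∀ x y z : L, σ ⁅x, y⁆ z - σ ⁅x, z⁆ y + σ ⁅y, z⁆ x = 0) →
      -- σ has degree 0: it vanishes on L_i ∧ L_j unless i + j = 0
      (∀ (i j : ℤ) (x y : L), HasDeg Lm Lz Lp i x → HasDeg Lm Lz Lp j y →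
        i + j ≠ 0 → σ x y = 0) →
      -- σ is the coboundary of a degree-0 cochain τ (τ(L_{±1}) = 0)
      ∃ τ : L →ₗ[k] M, (∀ x ∈ Lm, τ x = 0) ∧ (∀ x ∈ Lp, τ x = 0) ∧
        ∀ x y : L, σ x y = τ ⁅x, y⁆) :
    -- every central 0-extension of L splits via a graded homomorphism
    ∀ (K : Type u) (_ : LieRing K) (_ : LieAlgebra k K)
      (Km Kz Kp : Submodule k K) (_ : IsGrading3 k K Km Kz Kp)
      (φ : K →ₗ⁅k⁆ L),
      (∀ x ∈ Km, φ x ∈ Lm) → (∀ x ∈ Kz, φ x ∈ Lz) → (∀ x ∈ Kp, φ x ∈ Lp) →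
      Function.Surjective φ →
      (∀ x : K, φ x = 0 → x ∈ Kz) →
      (∀ x : K, φ x = 0 → ∀ y : K, ⁅x, y⁆ = 0) →
      ∃ ψ : L →ₗ⁅k⁆ K,
        (∀ x ∈ Lm, ψ x ∈ Km) ∧ (∀ x ∈ Lz, ψ x ∈ Kz) ∧ (∀ x ∈ Lp, ψ x ∈ Kp) ∧
        ∀ x, φ (ψ x) = x :=
  stmt19_general Lm Lz Lp hgr hH2
end
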